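/- arXiv:2001.05005 — 4 statements merged into one kernel-verified Lean document; each statement's English description precedes it below -/
import Mathlib

section
/- If g : ℝ × ℝⁿ → ℝⁿ is continuous and for each T > 0 there exist constants C₁(T), C₂(T) > 0 with ‖g(t,x)‖ ≤ C₁(T) + C₂(T)‖x‖ for all (t,x) ∈ [0,T] × ℝⁿ, then every solution of the initial value problem x'(t) = g(t, x(t)), x(0) = x_init, is defined for all t ≥ 0. -/
open Set intervalIntegral MeasureTheory Metric Filter Topology
set_option maxHeartbeats 1000000
set_option synthInstance.maxHeartbeats 1000000

variable {n : ℕ}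
local notation "E" => EuclideanSpace ℝ (Fin n)

theorem coord_le_norm (w : E) (i : Fin n) : |w i| ≤ ‖w‖ := by
  rw [EuclideanSpace.norm_eq]
  rw [show |w i| = Real.sqrt (‖w i‖^2) by
    rw [Real.norm_eq_abs, sq_abs, Real.sqrt_sq_eq_abs]]
  apply Real.sqrt_le_sqrt
  exact Finset.single_le_sum (f := fun j => ‖w j‖^2) (fun j _ => by positivity) (Finset.mem_univ i)

theorem norm_le_of_coords (w : E) (c : ℝ) (h : ∀ i, |w i| ≤ c) (hc : 0 ≤ c) :
    ‖w‖ ≤ Real.sqrt n * c := by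
  rw [EuclideanSpace.norm_eq]
  calc Real.sqrt (∑ i, ‖w i‖^2) ≤ Real.sqrt (∑ _i : Fin n, c^2) := by
        apply Real.sqrt_le_sqrt
        apply Finset.sum_le_sum
        intro i _
        rw [Real.norm_eq_abs]
        exact pow_le_pow_left₀ (abs_nonneg _) (h i) 2
    _ = Real.sqrt n * c := by
        rw [Finset.sum_const, Finset.card_univ, Fintype.card_fin, nsmul_eq_mul,
          Real.sqrt_mul (by positivity), Real.sqrt_sq hc]

theorem lip_approx (f : ℝ × E → E) (M : ℝ) (hM : ∀ p, ‖f p‖ ≤ M)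
    (hf : UniformContinuous f) {ε : ℝ} (hε : 0 < ε) :
    ∃ (K : ℝ) (h : ℝ × E → E), 0 ≤ K ∧ (∀ p q, dist (h p) (h q) ≤ K * dist p q) ∧
      ∀ p, ‖h p - f p‖ ≤ ε := by
  set ε' := ε / (Real.sqrt n + 1) with hε'def
  have hsn : (0:ℝ) ≤ Real.sqrt n := Real.sqrt_nonneg _
  have hε' : 0 < ε' := div_pos hε (by linarith)
  obtain ⟨δ, hδ, hmod⟩ := Metric.uniformContinuous_iff.1 hf ε' hε'
  set M₀ := max M 0 with hM₀def
  have hM₀ : 0 ≤ M₀ := le_max_right _ _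
  have hMM : ∀ p, ‖f p‖ ≤ M₀ := fun p => (hM p).trans (le_max_left _ _)
  set K := (2*M₀ + 1)/δ with hKdef
  have hK : 0 < K := by positivity
  have hbdd : ∀ (i : Fin n) (p : ℝ × E),
      BddBelow (range fun q => f q i + K * dist p q) := by
    intro i p
    refine ⟨-M₀, ?_⟩
    rintro r ⟨q, rfl⟩
    show -M₀ ≤ f q i + K * dist p q
    have h1 : -M₀ ≤ f q i := by
      have := (abs_le.1 ((coord_le_norm (f q) i).trans (hMM q))).1
      linarith
    have h2 : 0 ≤ K * dist p q := by positivity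
    linarith
  set hc : (ℝ × E) → Fin n → ℝ := fun p i => ⨅ q, (f q i + K * dist p q) with hcdef
  have hle : ∀ p i, hc p i ≤ f p i := by
    intro p i
    calc hc p i ≤ f p i + K * dist p p := ciInf_le (hbdd i p) p
      _ = f p i := by simp
  have hge : ∀ p i, f p i - ε' ≤ hc p i := by
    intro p i
    refine le_ciInf fun q => ?_
    show f p i - ε' ≤ f q i + K * dist p q
    rcases lt_or_ge (dist p q) δ with hd | hd
    · have h1 : |f p i - f q i| ≤ ε' := by
        have h2 : |(f p - f q) i| ≤ ‖f p - f q‖ := coord_le_norm _ _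
        rw [PiLp.sub_apply] at h2
        have := (hmod hd).le
        rw [dist_eq_norm] at this
        linarith [h2.trans this]
      have := (abs_le.1 h1).2
      have h3 : 0 ≤ K * dist p q := by positivity
      linarith
    · have h1 : f p i ≤ M₀ := (abs_le.1 ((coord_le_norm (f p) i).trans (hMM p))).2
      have h2 : -M₀ ≤ f q i := by
        have := (abs_le.1 ((coord_le_norm (f q) i).trans (hMM q))).1; linarith
      have h3 : K * δ ≤ K * dist p q := by
        apply mul_le_mul_of_nonneg_left hd hK.le
      have h4 : K * δ = 2*M₀ + 1 := by
        rw [hKdef]; exact div_mul_cancel₀ _ (ne_of_gt hδ)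
      nlinarith [hε'.le]
  have hlip1 : ∀ p p' i, hc p i ≤ hc p' i + K * dist p p' := by
    intro p p' i
    rw [← sub_le_iff_le_add]
    refine le_ciInf fun q => ?_
    show hc p i - K * dist p p' ≤ f q i + K * dist p' q
    have h1 : hc p i ≤ f q i + K * dist p q := ciInf_le (hbdd i p) q
    have h2 : dist p q ≤ dist p p' + dist p' q := dist_triangle _ _ _
    nlinarith [dist_nonneg (x := p) (y := p')]
  have hlipabs : ∀ p p' i, |hc p i - hc p' i| ≤ K * dist p p' := by
    intro p p' i
    rw [abs_sub_le_iff]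
    constructor
    · linarith [hlip1 p p' i]
    · rw [dist_comm]; linarith [hlip1 p' p i]
  set H : (ℝ × E) → E := fun p => WithLp.toLp 2 (fun i => hc p i) with hHdef
  refine ⟨Real.sqrt n * K, H, by positivity, ?_, ?_⟩
  · intro p q
    rw [dist_eq_norm]
    have h2 : ‖H p - H q‖ ≤ Real.sqrt n * (K * dist p q) := by
      refine norm_le_of_coords _ _ (fun i => ?_) (by positivity)
      rw [show (H p - H q) i = hc p i - hc q i from rfl]
      exact hlipabs p q i
    exact h2.trans (le_of_eq (by ring))
  · intro p
    have h2 : ‖H p - f p‖ ≤ Real.sqrt n * ε' := by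
      refine norm_le_of_coords _ _ (fun i => ?_) hε'.le
      rw [show (H p - f p) i = hc p i - f p i from rfl]
      rw [abs_le]
      constructor
      · linarith [hge p i]
      · linarith [hle p i, hε'.le]
    refine h2.trans ?_
    rw [hε'def, mul_div_assoc']
    rw [div_le_iff₀ (by linarith)]
    nlinarith

theorem primitive_hasDerivAt (φ : ℝ → E) (hφ : Continuous φ) (c : E) (d t : ℝ) :
    HasDerivAt (fun u => c + ∫ s in d..u, φ s) (φ t) t :=
  (intervalIntegral.integral_hasDerivAt_right (hφ.intervalIntegrable _ _)
    hφ.stronglyMeasurable.stronglyMeasurableAtFilter hφ.continuousAt).const_add c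

theorem gronwallBound_mono' {δ K ε : ℝ} (hδ : 0 ≤ δ) (hK : 0 < K) (hε : 0 ≤ ε) {s u : ℝ}
    (h : s ≤ u) : gronwallBound δ K ε s ≤ gronwallBound δ K ε u := by
  simp only [gronwallBound_of_K_ne_0 hK.ne']
  have h1 : Real.exp (K*s) ≤ Real.exp (K*u) := Real.exp_le_exp.2 (by nlinarith)
  have h2 : (0:ℝ) ≤ ε / K := by positivity
  nlinarith

theorem peano_interval (g : ℝ × E → E) (hg : Continuous g)
    (t₀ t₁ : ℝ) (hlt : t₀ < t₁) (C₁ C₂ : ℝ) (hC₁ : 0 < C₁) (hC₂ : 0 < C₂)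
    (hb : ∀ t ∈ Icc t₀ t₁, ∀ y : E, ‖g (t, y)‖ ≤ C₁ + C₂ * ‖y‖) (x₀ : E) :
    ∃ Z : ℝ → E, Continuous Z ∧ Z t₀ = x₀ ∧
      ∀ t ∈ Icc t₀ t₁, Z t = x₀ + ∫ s in t₀..t, g (s, Z s) := by
  classical
  set B' := gronwallBound ‖x₀‖ C₂ (C₁+1) (t₁ - t₀) with hB'def
  have hxB : ‖x₀‖ ≤ B' := by
    have hτ : (0:ℝ) ≤ t₁ - t₀ := by linarith
    have := gronwallBound_mono' (ε := C₁+1) (norm_nonneg x₀) hC₂ (by linarith) hτ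
    rwa [gronwallBound_x0] at this
  have hB0 : 0 ≤ B' := (norm_nonneg x₀).trans hxB
  set R := B' + 1 with hRdef
  have hR1 : 1 ≤ R := by linarith
  set M := C₁ + C₂ * (R + 1) with hMdef
  have hM0 : 0 < M := by nlinarith
  set χ : ℝ → ℝ := fun r => min 1 (max 0 (R + 1 - r)) with hχdef
  have hχ01 : ∀ r, 0 ≤ χ r ∧ χ r ≤ 1 := fun r =>
    ⟨le_min (by norm_num) (le_max_left _ _), min_le_left _ _⟩
  have hχ1 : ∀ r ≤ R, χ r = 1 := by
    intro r hr
    apply min_eq_left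
    refine le_max_of_le_right (by linarith)
  have hχ0 : ∀ r, R + 1 ≤ r → χ r = 0 := by
    intro r hr
    have : max 0 (R + 1 - r) = 0 := max_eq_left (by linarith)
    rw [hχdef]
    simp only [this]
    exact min_eq_right (by norm_num)
  have hχcont : Continuous χ :=
    continuous_const.min (continuous_const.max (continuous_const.sub continuous_id))
  set clamp : ℝ → ℝ := fun s => (projIcc t₀ t₁ hlt.le s : ℝ) with hclampdef
  have hclampmem : ∀ s, clamp s ∈ Icc t₀ t₁ := fun s => (projIcc t₀ t₁ hlt.le s).2
  have hclampeq : ∀ s ∈ Icc t₀ t₁, clamp s = s := fun s hs => by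
    rw [hclampdef]; simp only [projIcc_of_mem hlt.le hs]
  have hclampcont : Continuous clamp := continuous_subtype_val.comp (continuous_projIcc)
  have hclamplip : ∀ s u : ℝ, dist (clamp s) (clamp u) ≤ dist s u := by
    intro s u
    have h1 := (LipschitzWith.projIcc hlt.le).dist_le_mul s u
    rw [NNReal.coe_one, one_mul] at h1
    rw [Subtype.dist_eq] at h1
    exact h1
  set gc : ℝ × E → E := fun p => χ ‖p.2‖ • g (clamp p.1, p.2) with hgcdef
  have hgccont : Continuous gc := by
    apply Continuous.smul (hχcont.comp (continuous_norm.comp continuous_snd))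
    exact hg.comp ((hclampcont.comp continuous_fst).prodMk continuous_snd)
  have hgc_eq : ∀ t ∈ Icc t₀ t₁, ∀ y : E, ‖y‖ ≤ R → gc (t, y) = g (t, y) := by
    intro t ht y hy
    rw [hgcdef]
    simp only [hχ1 _ hy, hclampeq t ht, one_smul]
  have hgc_lin : ∀ p : ℝ × E, ‖gc p‖ ≤ C₁ + C₂ * ‖p.2‖ := by
    intro p
    rw [hgcdef]
    simp only [norm_smul, Real.norm_eq_abs, abs_of_nonneg (hχ01 _).1]
    have h1 := hb (clamp p.1) (hclampmem p.1) p.2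
    have h2 := (hχ01 ‖p.2‖).2
    have h3 := (hχ01 ‖p.2‖).1
    have h4 : (0:ℝ) ≤ C₁ + C₂ * ‖p.2‖ := by positivity
    nlinarith [norm_nonneg (g (clamp p.1, p.2))]
  have hgc_bd : ∀ p : ℝ × E, ‖gc p‖ ≤ M := by
    intro p
    rcases le_or_gt ‖p.2‖ (R+1) with h | h
    · exact (hgc_lin p).trans (by rw [hMdef]; nlinarith)
    · have : gc p = 0 := by
        rw [hgcdef]; simp only [hχ0 _ h.le, zero_smul]
      rw [this, norm_zero]; exact hM0.le
  -- uniform continuity of gc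
  have hgc_uc : UniformContinuous gc := by
    rw [Metric.uniformContinuous_iff]
    intro ε hε
    have hK₂ : IsCompact ((Icc t₀ t₁) ×ˢ (closedBall (0:E) (R+2))) :=
      isCompact_Icc.prod (isCompact_closedBall _ _)
    have huc2 := hK₂.uniformContinuousOn_of_continuous hgccont.continuousOn
    obtain ⟨δ₁, hδ₁, hδ₁h⟩ := Metric.uniformContinuousOn_iff.1 huc2 ε hε
    refine ⟨min δ₁ 1, lt_min hδ₁ one_pos, ?_⟩
    intro p q hpq
    have hd1 : dist p q < δ₁ := hpq.trans_le (min_le_left _ _)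
    have hd2 : dist p q < 1 := hpq.trans_le (min_le_right _ _)
    have hsnd : dist p.2 q.2 ≤ dist p q := le_trans (le_max_right _ _) (le_of_eq (Prod.dist_eq).symm)
    by_cases hbig : R + 1 ≤ ‖p.2‖ ∧ R + 1 ≤ ‖q.2‖
    · have e1 : gc p = 0 := by rw [hgcdef]; simp only [hχ0 _ hbig.1, zero_smul]
      have e2 : gc q = 0 := by rw [hgcdef]; simp only [hχ0 _ hbig.2, zero_smul]
      rw [e1, e2, dist_self]; exact hε
    · have habs : |‖p.2‖ - ‖q.2‖| ≤ dist p.2 q.2 := by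
        rw [dist_eq_norm]; exact abs_norm_sub_norm_le _ _
      have hlt1 : dist p.2 q.2 < 1 := hsnd.trans_lt hd2
      have habs1 := (abs_le.1 habs).1
      have habs2 := (abs_le.1 habs).2
      have hmems : ‖p.2‖ ≤ R + 2 ∧ ‖q.2‖ ≤ R + 2 := by
        rcases not_and_or.1 hbig with h | h <;> push_neg at h <;> constructor <;> linarith
      set p' : ℝ × E := (clamp p.1, p.2) with hp'def
      set q' : ℝ × E := (clamp q.1, q.2) with hq'def
      have e1 : gc p' = gc p := by
        rw [hgcdef]; simp only [hp'def]
        rw [hclampeq (clamp p.1) (hclampmem p.1)]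
      have e2 : gc q' = gc q := by
        rw [hgcdef]; simp only [hq'def]
        rw [hclampeq (clamp q.1) (hclampmem q.1)]
      have hmp : p' ∈ (Icc t₀ t₁) ×ˢ (closedBall (0:E) (R+2)) :=
        ⟨hclampmem p.1, by rw [mem_closedBall_zero_iff]; exact hmems.1⟩
      have hmq : q' ∈ (Icc t₀ t₁) ×ˢ (closedBall (0:E) (R+2)) :=
        ⟨hclampmem q.1, by rw [mem_closedBall_zero_iff]; exact hmems.2⟩
      have hdpq : dist p' q' ≤ dist p q := by
        rw [Prod.dist_eq]
        apply max_le
        · exact (hclamplip p.1 q.1).trans (le_trans (le_max_left _ _) (le_of_eq (Prod.dist_eq).symm))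
        · exact hsnd
      rw [← e1, ← e2]
      exact hδ₁h p' hmp q' hmq (hdpq.trans_lt hd1)
  -- Lipschitz approximations
  have happrox : ∀ j : ℕ, ∃ (K : ℝ) (h : ℝ × E → E), 0 ≤ K ∧
      (∀ p q, dist (h p) (h q) ≤ K * dist p q) ∧ ∀ p, ‖h p - gc p‖ ≤ 1/(j+1) :=
    fun j => lip_approx gc M hgc_bd hgc_uc (by positivity)
  choose Kj hj hK0 hlipj happj using happrox
  have hjlip : ∀ j, LipschitzWith (Real.toNNReal (Kj j)) (hj j) := by
    intro j
    apply LipschitzWith.of_dist_le_mul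
    intro p q
    rw [Real.coe_toNNReal _ (hK0 j)]
    exact hlipj j p q
  have hjcont : ∀ j, Continuous (hj j) := fun j => (hjlip j).continuous
  have hfrac1 : ∀ j : ℕ, (1:ℝ)/(j+1) ≤ 1 := by
    intro j
    rw [div_le_one (by positivity)]
    linarith [Nat.cast_nonneg (α := ℝ) j]
  have hdiff : ∀ j p, ‖hj j p‖ ≤ ‖gc p‖ + 1/(j+1) := by
    intro j p
    have he : gc p + (hj j p - gc p) = hj j p := by abel
    calc ‖hj j p‖ = ‖gc p + (hj j p - gc p)‖ := by rw [he]
      _ ≤ ‖gc p‖ + ‖hj j p - gc p‖ := norm_add_le _ _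
      _ ≤ ‖gc p‖ + 1/(j+1) := by linarith [happj j p]
  have hjbd : ∀ j p, ‖hj j p‖ ≤ M + 1 := fun j p =>
    (hdiff j p).trans (by linarith [hgc_bd p, hfrac1 j])
  have hjlin : ∀ j (t : ℝ) (y : E), ‖hj j (t,y)‖ ≤ (C₁+1) + C₂ * ‖y‖ := by
    intro j t y
    have := hdiff j (t, y)
    have h2 := hgc_lin (t, y)
    have := hfrac1 j
    simp only at h2
    linarith
  -- Picard-Lindelöf solutions for the approximations
  have hPL : ∀ j, ∃ f : ℝ → E, f t₀ = x₀ ∧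
      ∀ t ∈ Icc t₀ t₁, HasDerivWithinAt f (hj j (t, f t)) (Icc t₀ t₁) t := by
    intro j
    have hpl : IsPicardLindelof (fun t y => hj j (t,y)) (tmin := t₀) (tmax := t₁)
        ⟨t₀, le_refl _, hlt.le⟩ x₀ (Real.toNNReal ((M+1)*(t₁-t₀)+1)) 0
        (Real.toNNReal (M+1)) (Real.toNNReal (Kj j)) := by
      constructor
      · intro t ht
        have : LipschitzWith (Real.toNNReal (Kj j)) (fun y : E => hj j (t, y)) := by
          apply LipschitzWith.of_dist_le_mul
          intro y z
          rw [Real.coe_toNNReal _ (hK0 j)]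
          calc dist (hj j (t,y)) (hj j (t,z)) ≤ Kj j * dist ((t,y) : ℝ × E) (t,z) := hlipj j _ _
            _ = Kj j * dist y z := by
                rw [Prod.dist_eq]
                simp [dist_self, max_eq_right dist_nonneg]
        exact this.lipschitzOnWith
      · intro y hy
        exact ((hjcont j).comp (continuous_id.prodMk continuous_const)).continuousOn
      · intro t ht y hy
        rw [Real.coe_toNNReal _ (by linarith)]
        exact hjbd j (t, y)
      · have h1 : (0:ℝ) ≤ M + 1 := by linarith
        have h2 : (0:ℝ) ≤ (M+1)*(t₁-t₀)+1 := by nlinarith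
        simp only [Real.coe_toNNReal _ h1, Real.coe_toNNReal _ h2, NNReal.coe_zero, sub_self,
          sub_zero]
        rw [max_eq_left (by linarith)]
        nlinarith
    exact hpl.exists_eq_forall_mem_Icc_hasDerivWithinAt₀
  choose z hz0 hzd using hPL
  have hcontz : ∀ j, ContinuousOn (z j) (Icc t₀ t₁) :=
    fun j t ht => (hzd j t ht).continuousWithinAt
  have hintg : ∀ j (s t : ℝ), s ∈ Icc t₀ t₁ → t ∈ Icc t₀ t₁ →
      IntervalIntegrable (fun u => hj j (u, z j u)) volume s t := by
    intro j s t hs ht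
    apply ContinuousOn.intervalIntegrable
    have h1 : ContinuousOn (fun u => hj j (u, z j u)) (Icc t₀ t₁) :=
      (hjcont j).comp_continuousOn (continuousOn_id.prodMk (hcontz j))
    apply h1.mono
    rw [show Icc t₀ t₁ = uIcc t₀ t₁ from (uIcc_of_le hlt.le).symm]
    exact uIcc_subset_uIcc (by rw [uIcc_of_le hlt.le]; exact hs)
      (by rw [uIcc_of_le hlt.le]; exact ht)
  have hIEz : ∀ j, ∀ t ∈ Icc t₀ t₁, z j t = x₀ + ∫ s in t₀..t, hj j (s, z j s) := by
    intro j t ht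
    have h1 : ∫ s in t₀..t, hj j (s, z j s) = z j t - z j t₀ := by
      apply intervalIntegral.integral_eq_sub_of_hasDeriv_right_of_le ht.1
      · exact (hcontz j).mono (Icc_subset_Icc_right ht.2)
      · intro s hs
        refine (hzd j s ⟨hs.1.le, hs.2.le.trans ht.2⟩).mono_of_mem_nhdsWithin ?_
        refine mem_of_superset (Ioc_mem_nhdsGT_of_mem ⟨le_refl s, hs.2.trans_le ht.2⟩) ?_
        exact fun u hu => ⟨hs.1.le.trans hu.1.le, hu.2⟩
      · exact hintg j t₀ t ⟨le_refl _, hlt.le⟩ ht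
    rw [h1, hz0 j]
    abel
  have hGron : ∀ j, ∀ t ∈ Icc t₀ t₁, ‖z j t‖ ≤ B' := by
    intro j
    have h1 : ∀ t ∈ Icc t₀ t₁, ‖z j t‖ ≤ gronwallBound ‖x₀‖ C₂ (C₁+1) (t - t₀) := by
      apply norm_le_gronwallBound_of_norm_deriv_right_le (hcontz j)
      · intro s hs
        refine (hzd j s ⟨hs.1, hs.2.le⟩).mono_of_mem_nhdsWithin ?_
        refine mem_of_superset (Icc_mem_nhdsGE_of_mem ⟨le_refl s, hs.2⟩) ?_
        exact fun u hu => ⟨hs.1.trans hu.1, hu.2⟩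
      · exact le_of_eq (by rw [hz0 j])
      · intro s hs
        exact (hjlin j s (z j s)).trans (le_of_eq (by ring))
    intro t ht
    exact (h1 t ht).trans (gronwallBound_mono' (norm_nonneg x₀) hC₂ (by linarith)
      (by linarith [ht.2]))
  have hzlip : ∀ j, ∀ s ∈ Icc t₀ t₁, ∀ t ∈ Icc t₀ t₁, s ≤ t →
      ‖z j t - z j s‖ ≤ (M+1) * (t - s) := by
    intro j s hs t ht hst
    have h1 : z j t - z j s = ∫ u in s..t, hj j (u, z j u) := by
      rw [hIEz j t ht, hIEz j s hs]
      rw [← intervalIntegral.integral_interval_sub_left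
        (hintg j t₀ t ⟨le_refl _, hlt.le⟩ ht) (hintg j t₀ s ⟨le_refl _, hlt.le⟩ hs)]
      abel
    rw [h1]
    have h2 := intervalIntegral.norm_integral_le_of_norm_le_const (C := M+1) (a := s) (b := t)
      (f := fun u => hj j (u, z j u)) (fun u _ => hjbd j _)
    rwa [abs_of_nonneg (by linarith)] at h2
  -- Arzelà–Ascoli
  haveI : CompactSpace (Icc t₀ t₁) := isCompact_iff_compactSpace.1 isCompact_Icc
  set Fz : ℕ → (BoundedContinuousFunction (Icc t₀ t₁) E) :=
    fun j => BoundedContinuousFunction.mkOfCompact ⟨fun s => z j s, (hcontz j).restrict⟩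
    with hFzdef
  set A : Set (BoundedContinuousFunction (Icc t₀ t₁) E) :=
    {F | (∀ s, ‖F s‖ ≤ B') ∧ ∀ s t : Icc t₀ t₁, dist (F s) (F t) ≤ (M+1) * dist s t}
    with hAdef
  have hFA : ∀ j, Fz j ∈ A := by
    intro j
    constructor
    · intro s
      exact hGron j s s.2
    · intro s t
      rcases le_total (s:ℝ) (t:ℝ) with h | h
      · rw [dist_eq_norm, norm_sub_rev, Subtype.dist_eq, Real.dist_eq, abs_of_nonpos (by linarith)]
        have := hzlip j s s.2 t t.2 h
        exact this.trans (le_of_eq (by ring))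
      · rw [dist_eq_norm, Subtype.dist_eq, Real.dist_eq, abs_of_nonneg (by linarith)]
        exact hzlip j t t.2 s s.2 h
  have hequi : Equicontinuous ((↑) : A → (Icc t₀ t₁) → E) := by
    apply equicontinuous_of_continuity_modulus (fun d => (M+1)*d)
    · have : Tendsto (fun d : ℝ => (M+1)*d) (nhds 0) (nhds ((M+1)*0)) :=
        (continuous_const.mul continuous_id).tendsto 0
      simpa using this
    · intro x y F
      exact F.2.2 x y
  have hcomp : IsCompact (closure A) :=
    BoundedContinuousFunction.arzela_ascoli (closedBall (0:E) B') (isCompact_closedBall _ _) A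
      (fun F s hF => mem_closedBall_zero_iff.2 (hF.1 s)) hequi
  obtain ⟨W, hWmem, φ, hφ, hconv⟩ := hcomp.isSeqCompact (fun j => subset_closure (hFA j))
  set Z : ℝ → E := fun t => W (projIcc t₀ t₁ hlt.le t) with hZdef
  have hZcont : Continuous Z := W.continuous.comp continuous_projIcc
  have hZeq : ∀ t (ht : t ∈ Icc t₀ t₁), Z t = W ⟨t, ht⟩ := by
    intro t ht
    rw [hZdef]
    simp only [projIcc_of_mem hlt.le ht]
  have hdconv : Tendsto (fun i => dist (Fz (φ i)) W) atTop (nhds 0) := by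
    have := hconv.dist (tendsto_const_nhds (x := W))
    simpa using this
  have hptconv : ∀ (s : Icc t₀ t₁), Tendsto (fun i => z (φ i) s) atTop (nhds (W s)) := by
    intro s
    rw [tendsto_iff_dist_tendsto_zero]
    apply squeeze_zero (fun i => dist_nonneg)
      (fun i => BoundedContinuousFunction.dist_coe_le_dist (f := Fz (φ i)) (g := W) s) hdconv
  have hWb : ∀ (s : Icc t₀ t₁), ‖W s‖ ≤ B' := by
    intro s
    apply le_of_tendsto (hptconv s).norm
    exact Eventually.of_forall fun i => hGron (φ i) s s.2
  -- limit of the integral equations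
  have hZIE : ∀ t ∈ Icc t₀ t₁, Z t = x₀ + ∫ s in t₀..t, gc (s, Z s) := by
    intro t ht
    have hgcZcont : Continuous (fun s => gc (s, Z s)) :=
      hgccont.comp (continuous_id.prodMk hZcont)
    have hkey : Tendsto (fun i => ∫ s in t₀..t, hj (φ i) (s, z (φ i) s)) atTop
        (nhds (∫ s in t₀..t, gc (s, Z s))) := by
      rw [Metric.tendsto_atTop]
      intro ε hε
      have hτpos : (0:ℝ) < t₁ - t₀ := by linarith
      set ε'' := ε/(4*(t₁-t₀)+4) with hε''def
      have hε''pos : 0 < ε'' := by positivity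
      obtain ⟨δ, hδ, hδh⟩ := Metric.uniformContinuous_iff.1 hgc_uc ε'' hε''pos
      obtain ⟨N₁, hN₁⟩ := (Metric.tendsto_atTop.1 hdconv) δ hδ
      obtain ⟨N₂, hN₂⟩ := exists_nat_one_div_lt hε''pos
      refine ⟨max N₁ N₂, fun i hi => ?_⟩
      have hiN₁ : N₁ ≤ i := le_trans (le_max_left _ _) hi
      have hiN₂ : N₂ ≤ i := le_trans (le_max_right _ _) hi
      have hBCF : dist (Fz (φ i)) W < δ := by
        have := hN₁ i hiN₁
        rwa [Real.dist_eq, sub_zero, abs_of_nonneg dist_nonneg] at this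
      have hptw : ∀ s ∈ uIoc t₀ t, ‖hj (φ i) (s, z (φ i) s) - gc (s, Z s)‖ ≤ 2*ε'' := by
        intro s hs
        rw [uIoc_of_le ht.1] at hs
        have hsmem : s ∈ Icc t₀ t₁ := ⟨hs.1.le, hs.2.trans ht.2⟩
        have h1 : ‖hj (φ i) (s, z (φ i) s) - gc (s, z (φ i) s)‖ ≤ 1/(φ i + 1) := happj _ _
        have h1' : (1:ℝ)/(φ i + 1) ≤ 1/(N₂+1) := by
          apply one_div_le_one_div_of_le (by positivity)
          have : (N₂:ℝ) ≤ i := Nat.cast_le.2 hiN₂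
          have h2 : (i:ℝ) ≤ φ i := Nat.cast_le.2 hφ.le_apply
          linarith
        have h2 : dist (z (φ i) s) (W ⟨s, hsmem⟩) < δ :=
          lt_of_le_of_lt (BoundedContinuousFunction.dist_coe_le_dist
            (f := Fz (φ i)) (g := W) ⟨s, hsmem⟩) hBCF
        have h3 : ‖gc (s, z (φ i) s) - gc (s, Z s)‖ ≤ ε'' := by
          rw [hZeq s hsmem, ← dist_eq_norm]
          apply le_of_lt
          apply hδh
          rw [Prod.dist_eq]
          simp only [dist_self]
          rw [max_eq_right dist_nonneg]
          exact h2
        calc ‖hj (φ i) (s, z (φ i) s) - gc (s, Z s)‖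
            ≤ ‖hj (φ i) (s, z (φ i) s) - gc (s, z (φ i) s)‖ + ‖gc (s, z (φ i) s) - gc (s, Z s)‖ := by
              have := norm_sub_le_norm_sub_add_norm_sub (hj (φ i) (s, z (φ i) s))
                (gc (s, z (φ i) s)) (gc (s, Z s))
              exact this
          _ ≤ 2*ε'' := by linarith [h1.trans (h1'.trans hN₂.le)]
      have hint1 := hintg (φ i) t₀ t ⟨le_refl _, hlt.le⟩ ht
      have hint2 : IntervalIntegrable (fun s => gc (s, Z s)) volume t₀ t :=
        hgcZcont.intervalIntegrable _ _
      rw [dist_eq_norm, ← intervalIntegral.integral_sub hint1 hint2]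
      have h4 := intervalIntegral.norm_integral_le_of_norm_le_const (C := 2*ε'')
        (a := t₀) (b := t) (f := fun s => hj (φ i) (s, z (φ i) s) - gc (s, Z s)) hptw
      have h5 : |t - t₀| ≤ t₁ - t₀ := by
        rw [abs_of_nonneg (by linarith [ht.1])]
        linarith [ht.2]
      calc ‖∫ s in t₀..t, (hj (φ i) (s, z (φ i) s) - gc (s, Z s))‖
          ≤ 2*ε'' * |t - t₀| := h4
        _ ≤ 2*ε'' * (t₁ - t₀) := by nlinarith
        _ < ε := by
            have hc : ε'' * (4*(t₁-t₀)+4) = ε := by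
              rw [hε''def]; exact div_mul_cancel₀ _ (by positivity)
            nlinarith [hε''pos, hτpos]
    have hlim2 : Tendsto (fun i => z (φ i) t) atTop
        (nhds (x₀ + ∫ s in t₀..t, gc (s, Z s))) := by
      have he : (fun i => z (φ i) t) = fun i => x₀ + ∫ s in t₀..t, hj (φ i) (s, z (φ i) s) :=
        funext fun i => hIEz (φ i) t ht
      rw [he]
      exact hkey.const_add x₀
    have hlim1 : Tendsto (fun i => z (φ i) t) atTop (nhds (Z t)) := by
      rw [hZeq t ht]
      exact hptconv ⟨t, ht⟩
    exact tendsto_nhds_unique hlim1 hlim2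
  refine ⟨Z, hZcont, ?_, ?_⟩
  · have := hZIE t₀ ⟨le_refl _, hlt.le⟩
    rwa [intervalIntegral.integral_same, add_zero] at this
  · intro t ht
    rw [hZIE t ht]
    congr 1
    apply intervalIntegral.integral_congr
    intro s hs
    rw [uIcc_of_le ht.1] at hs
    have hsmem : s ∈ Icc t₀ t₁ := ⟨hs.1, hs.2.trans ht.2⟩
    have hZs : ‖Z s‖ ≤ R := by
      rw [hZeq s hsmem]
      exact (hWb _).trans (by linarith)
    exact hgc_eq s hsmem (Z s) hZs

theorem stage0 (g : ℝ × E → E) (hg : Continuous g) (a : ℝ) (ha : 0 < a)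
    (C₁ C₂ : ℝ) (hC₁ : 0 < C₁) (hC₂ : 0 < C₂)
    (hb : ∀ t ∈ Icc 0 a, ∀ y : E, ‖g (t,y)‖ ≤ C₁ + C₂ * ‖y‖)
    (x : ℝ → E) (x_init : E) (hx0 : x 0 = x_init)
    (hx : ∀ t ∈ Ico 0 a, HasDerivAt x (g (t, x t)) t) :
    ∃ xb : ℝ → E, Continuous xb ∧ (∀ t ∈ Ico 0 a, xb t = x t) ∧
      ∀ t ∈ Icc 0 a, xb t = x_init + ∫ s in (0:ℝ)..t, g (s, xb s) := by
  classical
  have hxc : ∀ t ∈ Ico 0 a, ContinuousAt x t := fun t ht => (hx t ht).continuousAt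
  have hcont : ContinuousOn x (Ico 0 a) := fun t ht => (hxc t ht).continuousWithinAt
  have hφc : ∀ s ∈ Ico 0 a, ContinuousAt (fun u => g (u, x u)) s := by
    intro s hs
    exact hg.continuousAt.comp (continuousAt_id.prodMk (hxc s hs))
  have hintx : ∀ s t : ℝ, s ∈ Ico 0 a → t ∈ Ico 0 a →
      IntervalIntegrable (fun u => g (u, x u)) volume s t := by
    intro s t hs ht
    apply ContinuousOn.intervalIntegrable
    intro u hu
    have hu' : u ∈ Ico 0 a := by
      rcases le_total s t with h | h
      · rw [uIcc_of_le h] at hu; exact ⟨hs.1.trans hu.1, lt_of_le_of_lt hu.2 ht.2⟩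
      · rw [uIcc_of_ge h] at hu; exact ⟨ht.1.trans hu.1, lt_of_le_of_lt hu.2 hs.2⟩
    exact (hφc u hu').continuousWithinAt
  have hIE : ∀ t ∈ Ico 0 a, x t = x_init + ∫ s in (0:ℝ)..t, g (s, x s) := by
    intro t ht
    have key : ∫ s in (0:ℝ)..t, g (s, x s) = x t - x 0 := by
      apply intervalIntegral.integral_eq_sub_of_hasDerivAt
      · intro s hs
        rw [uIcc_of_le ht.1] at hs
        exact hx s ⟨hs.1, lt_of_le_of_lt hs.2 ht.2⟩
      · exact hintx 0 t ⟨le_refl _, ha⟩ ht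
    rw [key, hx0]
    abel
  set B := gronwallBound ‖x_init‖ C₂ C₁ a with hBdef
  have hB : ∀ t ∈ Ico 0 a, ‖x t‖ ≤ B := by
    intro t ht
    have h1 : ∀ u ∈ Icc (0:ℝ) t, ‖x u‖ ≤ gronwallBound ‖x_init‖ C₂ C₁ (u - 0) := by
      apply norm_le_gronwallBound_of_norm_deriv_right_le (f' := fun s => g (s, x s))
      · exact hcont.mono (fun u hu => ⟨hu.1, lt_of_le_of_lt hu.2 ht.2⟩)
      · intro s hs
        exact (hx s ⟨hs.1, lt_of_lt_of_le hs.2 ht.2.le⟩).hasDerivWithinAt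
      · exact le_of_eq (by rw [hx0])
      · intro s hs
        exact (hb s ⟨hs.1, (lt_of_lt_of_le hs.2 ht.2.le).le⟩ (x s)).trans (le_of_eq (by ring))
    have h2 := h1 t ⟨ht.1, le_refl _⟩
    rw [sub_zero] at h2
    exact h2.trans (gronwallBound_mono' (norm_nonneg _) hC₂ hC₁.le ht.2.le)
  have hB0 : 0 ≤ B := (norm_nonneg (x 0)).trans (hB 0 ⟨le_refl _, ha⟩)
  set M := C₁ + C₂ * B with hMdef
  have hM0 : 0 < M := by nlinarith
  have hlipx : ∀ s t : ℝ, s ∈ Ico 0 a → t ∈ Ico 0 a → s ≤ t →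
      ‖x t - x s‖ ≤ M * (t - s) := by
    intro s t hs ht hst
    have h1 : x t - x s = ∫ u in s..t, g (u, x u) := by
      rw [hIE t ht, hIE s hs]
      rw [← intervalIntegral.integral_interval_sub_left (hintx 0 t ⟨le_refl _, ha⟩ ht)
        (hintx 0 s ⟨le_refl _, ha⟩ hs)]
      abel
    rw [h1]
    have h2 := intervalIntegral.norm_integral_le_of_norm_le_const (C := M) (a := s) (b := t)
      (f := fun u => g (u, x u)) ?_
    · rwa [abs_of_nonneg (by linarith)] at h2
    · intro u hu
      rw [uIoc_of_le hst] at hu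
      have hu' : u ∈ Ico 0 a := ⟨hs.1.trans hu.1.le, lt_of_le_of_lt hu.2 ht.2⟩
      calc ‖g (u, x u)‖ ≤ C₁ + C₂ * ‖x u‖ := hb u ⟨hu'.1, hu'.2.le⟩ (x u)
        _ ≤ M := by
            have := hB u hu'
            nlinarith
  set sk : ℕ → ℝ := fun k => a - a/(k+1) with hskdef
  have hsk0 : ∀ k : ℕ, (0:ℝ) < a/(k+1) := by
    intro k
    positivity
  have hskmem : ∀ k, sk k ∈ Ico 0 a := by
    intro k
    constructor
    · rw [hskdef]
      simp only [sub_nonneg]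
      apply div_le_self ha.le
      have : (0:ℝ) ≤ (k:ℝ) := Nat.cast_nonneg k
      linarith
    · rw [hskdef]
      simp only
      linarith [hsk0 k]
  have hskmono : ∀ N k : ℕ, N ≤ k → sk N ≤ sk k := by
    intro N k h
    rw [hskdef]
    simp only
    have : a/(k+1) ≤ a/(N+1) := by
      apply div_le_div_of_nonneg_left ha.le (by positivity)
      have : (N:ℝ) ≤ (k:ℝ) := Nat.cast_le.2 h
      linarith
    linarith
  have hskgap : ∀ N k : ℕ, N ≤ k → sk k - sk N ≤ a/(N+1) := by
    intro N k h
    rw [hskdef]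
    simp only
    have := (hsk0 k).le
    linarith
  have hcauchy : CauchySeq (fun k => x (sk k)) := by
    refine cauchySeq_of_le_tendsto_0 (fun N => M * (a/(N+1))) ?_ ?_
    · intro m k N hm hk
      show dist (x (sk m)) (x (sk k)) ≤ M * (a / ((N:ℝ) + 1))
      rcases le_total m k with h | h
      · rw [dist_eq_norm, norm_sub_rev]
        have h2 := hlipx (sk m) (sk k) (hskmem m) (hskmem k) (hskmono m k h)
        have h3 : sk k - sk m ≤ a/(N+1) :=
          (sub_le_sub_left (hskmono N m hm) (sk k)).trans (hskgap N k hk)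
        exact h2.trans (mul_le_mul_of_nonneg_left h3 hM0.le)
      · rw [dist_eq_norm]
        have h2 := hlipx (sk k) (sk m) (hskmem k) (hskmem m) (hskmono k m h)
        have h3 : sk m - sk k ≤ a/(N+1) :=
          (sub_le_sub_left (hskmono N k hk) (sk m)).trans (hskgap N m hm)
        exact h2.trans (mul_le_mul_of_nonneg_left h3 hM0.le)
    · have h1 : Tendsto (fun N : ℕ => a * (1/(N+1:ℝ))) atTop (nhds (a * 0)) :=
        tendsto_one_div_add_atTop_nhds_zero_nat.const_mul a
      have h2 : Tendsto (fun N : ℕ => M * (a * (1/(N+1:ℝ)))) atTop (nhds (M * (a * 0))) :=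
        h1.const_mul M
      have he : (fun N : ℕ => M * (a/(N+1))) = fun N : ℕ => M * (a * (1/(N+1:ℝ))) := by
        funext N
        rw [mul_one_div]
      rw [he]
      simpa using h2
  obtain ⟨L, hL⟩ := cauchySeq_tendsto_of_complete hcauchy
  have hsklim : Tendsto sk atTop (nhds a) := by
    have h1 : Tendsto (fun N : ℕ => a - a * (1/(N+1:ℝ))) atTop (nhds (a - a * 0)) :=
      (tendsto_one_div_add_atTop_nhds_zero_nat.const_mul a).const_sub a
    have he : sk = fun N : ℕ => a - a * (1/(N+1:ℝ)) := by
      funext N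
      rw [hskdef, mul_one_div]
    rw [he]
    simpa using h1
  have hxL : ∀ t ∈ Ico 0 a, ‖x t - L‖ ≤ M * (a - t) := by
    intro t ht
    have h1 : Tendsto (fun k => ‖x t - x (sk k)‖) atTop (nhds ‖x t - L‖) :=
      (tendsto_const_nhds.sub hL).norm
    apply le_of_tendsto h1
    have hev : ∀ᶠ k in atTop, t ≤ sk k := by
      have h2 : ∀ᶠ k in atTop, sk k ∈ Ioo t (a+1) :=
        hsklim.eventually (Ioo_mem_nhds ht.2 (by linarith))
      filter_upwards [h2] with k hk using hk.1.le
    filter_upwards [hev] with k hk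
    have h3 := hlipx t (sk k) ht (hskmem k) hk
    rw [norm_sub_rev]
    have := (hskmem k).2
    nlinarith [hM0.le]
  set xb : ℝ → E := fun t => if t < a then x (max t 0) else L with hxbdef
  have hxbeq : ∀ t ∈ Ico 0 a, xb t = x t := by
    intro t ht
    rw [hxbdef]
    simp only [if_pos ht.2, max_eq_left ht.1]
  have hxba : xb a = L := by
    rw [hxbdef]
    simp only [lt_irrefl, if_false]
  have hxbcont : Continuous xb := by
    rw [continuous_iff_continuousAt]
    intro t
    rcases lt_trichotomy t a with h | h | h
    · have hmem : max t 0 ∈ Ico 0 a := by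
        constructor
        · exact le_max_right _ _
        · rcases le_or_gt t 0 with h2 | h2
          · rw [max_eq_right h2]; exact ha
          · rw [max_eq_left h2.le]; exact h
      have hmaxc : ContinuousAt (fun u : ℝ => max u 0) t :=
        (continuous_id.max continuous_const).continuousAt
      have hcand : ContinuousAt (x ∘ (fun u : ℝ => max u 0)) t :=
        ContinuousAt.comp (hxc (max t 0) hmem) hmaxc
      apply hcand.congr
      filter_upwards [Iio_mem_nhds h] with u hu
      simp only [hxbdef]
      rw [if_pos (show u < a from hu)]
      rfl
    · subst h
      rw [Metric.continuousAt_iff]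
      intro ε hε
      refine ⟨min (ε/(M+1)) t, lt_min (by positivity) ha, ?_⟩
      intro u hu
      rw [hxba]
      rcases lt_or_ge u t with h2 | h2
      · have hu0 : 0 < u := by
          rw [Real.dist_eq, abs_of_nonpos (by linarith)] at hu
          have := lt_of_lt_of_le hu (min_le_right _ _)
          linarith
        have humem : u ∈ Ico 0 t := ⟨hu0.le, h2⟩
        rw [hxbeq u humem, dist_eq_norm]
        have h3 := hxL u humem
        have h4 : t - u < ε/(M+1) := by
          rw [Real.dist_eq, abs_of_nonpos (by linarith)] at hu
          have := lt_of_lt_of_le hu (min_le_left _ _)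
          linarith
        have h5 : M * (t - u) < ε := by
          rw [lt_div_iff₀ (by linarith : (0:ℝ) < M + 1)] at h4
          nlinarith [hM0.le]
        linarith [h3]
      · have : xb u = L := by
          rw [hxbdef]
          simp only [if_neg (not_lt.2 h2)]
        rw [this, dist_self]
        exact hε
    · have hconst : ContinuousAt (fun _ : ℝ => L) t := continuousAt_const
      apply hconst.congr
      filter_upwards [Ioi_mem_nhds h] with u hu
      rw [hxbdef]
      simp only [if_neg (not_lt.2 (le_of_lt (mem_Ioi.1 hu)))]
  have hψc : Continuous (fun s => g (s, xb s)) := hg.comp (continuous_id.prodMk hxbcont)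
  have hIEb : ∀ t ∈ Ico 0 a, xb t = x_init + ∫ s in (0:ℝ)..t, g (s, xb s) := by
    intro t ht
    rw [hxbeq t ht, hIE t ht]
    congr 1
    apply intervalIntegral.integral_congr
    intro s hs
    rw [uIcc_of_le ht.1] at hs
    have hmem2 : s ∈ Ico 0 a := ⟨hs.1, lt_of_le_of_lt hs.2 ht.2⟩
    show g (s, x s) = g (s, xb s)
    rw [hxbeq s hmem2]
  have hIEba : xb a = x_init + ∫ s in (0:ℝ)..a, g (s, xb s) := by
    have hprimc : Continuous (fun u => x_init + ∫ s in (0:ℝ)..u, g (s, xb s)) := by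
      rw [continuous_iff_continuousAt]
      intro u
      exact (primitive_hasDerivAt (fun s => g (s, xb s)) hψc x_init 0 u).continuousAt
    have h2 : Tendsto (fun k => x_init + ∫ s in (0:ℝ)..(sk k), g (s, xb s)) atTop
        (nhds (x_init + ∫ s in (0:ℝ)..a, g (s, xb s))) :=
      (hprimc.tendsto a).comp hsklim
    have he : (fun k => x_init + ∫ s in (0:ℝ)..(sk k), g (s, xb s)) = fun k => x (sk k) := by
      funext k
      rw [← hIEb (sk k) (hskmem k), hxbeq (sk k) (hskmem k)]
    rw [he] at h2
    rw [hxba]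
    exact tendsto_nhds_unique hL h2
  refine ⟨xb, hxbcont, hxbeq, ?_⟩
  intro t ht
  rcases lt_or_eq_of_le ht.2 with h | h
  · exact hIEb t ⟨ht.1, h⟩
  · subst h
    exact hIEba

theorem step_ext (g : ℝ × E → E) (hg : Continuous g)
    (hbound : ∀ T > (0:ℝ), ∃ C₁ > (0:ℝ), ∃ C₂ > (0:ℝ),
      ∀ t ∈ Set.Icc (0:ℝ) T, ∀ x : E, ‖g (t, x)‖ ≤ C₁ + C₂ * ‖x‖)
    (x_init : E) (c : ℝ) (hc : 0 < c) (f : ℝ → E) (hfc : Continuous f)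
    (hfIE : ∀ t ∈ Icc (0:ℝ) c, f t = x_init + ∫ s in (0:ℝ)..t, g (s, f s)) :
    ∃ f' : ℝ → E, Continuous f' ∧ (∀ t ≤ c, f' t = f t) ∧
      ∀ t ∈ Icc (0:ℝ) (c+1), f' t = x_init + ∫ s in (0:ℝ)..t, g (s, f' s) := by
  classical
  obtain ⟨C₁, hC₁, C₂, hC₂, hb⟩ := hbound (c+1) (by linarith)
  have hbsub : ∀ t ∈ Icc c (c+1), ∀ y : E, ‖g (t,y)‖ ≤ C₁ + C₂ * ‖y‖ :=
    fun t ht y => hb t ⟨hc.le.trans ht.1, ht.2⟩ y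
  obtain ⟨Z, hZc, hZ0, hZIE⟩ := peano_interval g hg c (c+1) (by linarith) C₁ C₂ hC₁ hC₂
    hbsub (f c)
  set F := fun t => if t ≤ c then f t else Z t with hFdef
  have hFf : ∀ t ≤ c, F t = f t := by
    intro t ht
    rw [hFdef]
    simp only [if_pos ht]
  have hFZ : ∀ t ∈ Icc c (c+1), F t = Z t := by
    intro t ht
    by_cases h : t ≤ c
    · have he : t = c := le_antisymm h ht.1
      subst he
      rw [hFf t (le_refl t), hZ0]
    · rw [hFdef]
      simp only [if_neg h]
  have hFc : Continuous F := by
    rw [hFdef]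
    apply Continuous.if_le hfc hZc continuous_id continuous_const
    intro t hteq
    simp only [id] at hteq
    rw [hteq, hZ0]
  have hint : ∀ u v : ℝ, IntervalIntegrable (fun s => g (s, F s)) volume u v :=
    fun u v => (hg.comp (continuous_id.prodMk hFc)).intervalIntegrable u v
  refine ⟨F, hFc, hFf, ?_⟩
  intro t ht
  by_cases h : t ≤ c
  · rw [hFf t h, hfIE t ⟨ht.1, h⟩]
    congr 1
    apply intervalIntegral.integral_congr
    intro s hs
    rw [uIcc_of_le ht.1] at hs
    show g (s, f s) = g (s, F s)
    rw [hFf s (hs.2.trans h)]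
  · push_neg at h
    have h1 : F t = Z t := hFZ t ⟨h.le, ht.2⟩
    have h2 : ∫ s in c..t, g (s, Z s) = ∫ s in c..t, g (s, F s) := by
      apply intervalIntegral.integral_congr
      intro s hs
      rw [uIcc_of_le h.le] at hs
      show g (s, Z s) = g (s, F s)
      rw [hFZ s ⟨hs.1, hs.2.trans ht.2⟩]
    have h3 : ∫ s in (0:ℝ)..c, g (s, f s) = ∫ s in (0:ℝ)..c, g (s, F s) := by
      apply intervalIntegral.integral_congr
      intro s hs
      rw [uIcc_of_le hc.le] at hs
      show g (s, f s) = g (s, F s)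
      rw [hFf s hs.2]
    rw [h1, hZIE t ⟨h.le, ht.2⟩, h2, hfIE c ⟨hc.le, le_refl c⟩, h3, add_assoc]
    congr 1
    exact intervalIntegral.integral_add_adjacent_intervals (hint 0 c) (hint c t)

theorem main_assembly (g : ℝ × E → E) (hg : Continuous g)
    (hbound : ∀ T > (0:ℝ), ∃ C₁ > (0:ℝ), ∃ C₂ > (0:ℝ),
      ∀ t ∈ Set.Icc (0:ℝ) T, ∀ x : E, ‖g (t, x)‖ ≤ C₁ + C₂ * ‖x‖)
    (x_init : E) (a : ℝ) (ha : 0 < a) (x : ℝ → E) (hx0 : x 0 = x_init)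
    (hx : ∀ t ∈ Set.Ico (0:ℝ) a, HasDerivAt x (g (t, x t)) t) :
    ∃ y : ℝ → E, y 0 = x_init ∧
      (∀ t ∈ Set.Ici (0:ℝ), HasDerivAt y (g (t, y t)) t) ∧
      (∀ t ∈ Set.Ico (0:ℝ) a, y t = x t) := by
  classical
  obtain ⟨C₁a, hC₁a, C₂a, hC₂a, hba⟩ := hbound a ha
  obtain ⟨x0b, hx0bc, hx0beq, hx0bIE⟩ := stage0 g hg a ha C₁a C₂a hC₁a hC₂a hba x x_init hx0 hx
  set P : ℕ → (ℝ → E) → Prop := fun k f => Continuous f ∧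
    ∀ t ∈ Icc (0:ℝ) (a + k), f t = x_init + ∫ s in (0:ℝ)..t, g (s, f s) with hPdef
  have hP0 : P 0 x0b := by
    refine ⟨hx0bc, ?_⟩
    intro t ht
    rw [Nat.cast_zero, add_zero] at ht
    exact hx0bIE t ht
  have hstep : ∀ (k : ℕ) (f : ℝ → E), P k f →
      ∃ f', P (k+1) f' ∧ ∀ t ≤ a + (k:ℝ), f' t = f t := by
    rintro k f ⟨hfc, hfIE⟩
    have hc : (0:ℝ) < a + k := by
      have : (0:ℝ) ≤ (k:ℝ) := Nat.cast_nonneg k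
      linarith
    obtain ⟨f', hf'c, hf'eq, hf'IE⟩ := step_ext g hg hbound x_init (a + k) hc f hfc hfIE
    refine ⟨f', ⟨hf'c, ?_⟩, hf'eq⟩
    intro t ht
    apply hf'IE
    have hcast : ((k+1 : ℕ) : ℝ) = (k:ℝ) + 1 := by push_cast; ring
    rw [hcast] at ht
    constructor
    · exact ht.1
    · linarith [ht.2]
  let seq : ∀ k : ℕ, {f : ℝ → E // P k f} :=
    fun k => Nat.rec ⟨x0b, hP0⟩
      (fun k p => ⟨(hstep k p.1 p.2).choose, (hstep k p.1 p.2).choose_spec.1⟩) k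
  have hco : ∀ k : ℕ, ∀ t ≤ a + (k:ℝ), (seq (k+1)).1 t = (seq k).1 t := by
    intro k t ht
    exact (hstep k (seq k).1 (seq k).2).choose_spec.2 t ht
  have hchain : ∀ j k : ℕ, j ≤ k → ∀ t ≤ a + (j:ℝ), (seq k).1 t = (seq j).1 t := by
    intro j k hjk
    induction hjk with
    | refl => intro t ht; rfl
    | @step k' hk' ih =>
        intro t ht
        have h1 : t ≤ a + (k':ℝ) := by
          have : (j:ℝ) ≤ (k':ℝ) := Nat.cast_le.2 hk'
          linarith
        rw [hco k' t h1]
        exact ih t ht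
  set Y : ℝ → E := fun t => (seq ⌈max t 0⌉₊).1 t with hYdef'
  have hYdef : ∀ (k : ℕ) (t : ℝ), t ≤ a + k → Y t = (seq k).1 t := by
    intro k t ht
    have hm : t ≤ a + (⌈max t 0⌉₊ : ℝ) := by
      have h1 : t ≤ (⌈max t 0⌉₊ : ℝ) := le_trans (le_max_left t 0) (Nat.le_ceil _)
      linarith
    rcases le_total (⌈max t 0⌉₊) k with h | h
    · rw [hYdef']
      simp only
      rw [hchain _ k h t hm]
    · rw [hYdef']
      simp only
      rw [hchain k _ h t ht]
  have hYIE : ∀ (k : ℕ), ∀ t ∈ Icc (0:ℝ) (a + k),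
      Y t = x_init + ∫ s in (0:ℝ)..t, g (s, Y s) := by
    intro k t ht
    rw [hYdef k t ht.2, (seq k).2.2 t ht]
    congr 1
    apply intervalIntegral.integral_congr
    intro s hs
    rw [uIcc_of_le ht.1] at hs
    show g (s, (seq k).1 s) = g (s, Y s)
    rw [hYdef k s (hs.2.trans ht.2)]
  have hYc : Continuous Y := by
    rw [continuous_iff_continuousAt]
    intro t
    set k := ⌈max t 0⌉₊ + 1 with hkdef
    have hlt : t < a + (k:ℝ) := by
      have h1 : t ≤ (⌈max t 0⌉₊ : ℝ) := le_trans (le_max_left t 0) (Nat.le_ceil _)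
      have h2 : ((k:ℕ):ℝ) = (⌈max t 0⌉₊ : ℝ) + 1 := by rw [hkdef]; push_cast; ring
      rw [h2]
      linarith
    apply ((seq k).2.1.continuousAt).congr
    filter_upwards [Iio_mem_nhds hlt] with u hu
    exact (hYdef k u (le_of_lt hu)).symm
  have hYx : ∀ t ∈ Ico (0:ℝ) a, Y t = x t := by
    intro t ht
    have h1 : Y t = (seq 0).1 t := by
      apply hYdef 0 t
      rw [Nat.cast_zero, add_zero]
      exact ht.2.le
    rw [h1]
    show x0b t = x t
    exact hx0beq t ht
  have hY0 : Y 0 = x_init := by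
    have h1 := hYIE 0 0 ⟨le_refl _, by positivity⟩
    rwa [intervalIntegral.integral_same, add_zero] at h1
  have hψc : Continuous (fun s => g (s, Y s)) := hg.comp (continuous_id.prodMk hYc)
  have hprim : ∀ u : ℝ, HasDerivAt (fun v => x_init + ∫ s in (0:ℝ)..v, g (s, Y s))
      (g (u, Y u)) u := primitive_hasDerivAt _ hψc x_init 0
  set y : ℝ → E := fun t => if t < 0 then x_init + t • g (0, x_init) else Y t with hydef
  have hyY : ∀ t : ℝ, 0 ≤ t → y t = Y t := by
    intro t ht
    rw [hydef]
    simp only [if_neg (not_lt.2 ht)]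
  refine ⟨y, ?_, ?_, ?_⟩
  · rw [hyY 0 (le_refl 0), hY0]
  · intro t ht
    rcases lt_or_eq_of_le (mem_Ici.1 ht) with htpos | hteq
    · -- t > 0
      set k := ⌈t⌉₊ + 1 with hkdef
      have hlt : t < a + (k:ℝ) := by
        have h1 : t ≤ (⌈t⌉₊ : ℝ) := Nat.le_ceil t
        have h2 : ((k:ℕ):ℝ) = (⌈t⌉₊ : ℝ) + 1 := by rw [hkdef]; push_cast; ring
        rw [h2]
        linarith
      have hYder : HasDerivAt Y (g (t, Y t)) t := by
        apply (hprim t).congr_of_eventuallyEq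
        filter_upwards [Ioo_mem_nhds htpos hlt] with u hu
        exact hYIE k u ⟨hu.1.le, hu.2.le⟩
      have hyder : HasDerivAt y (g (t, Y t)) t := by
        apply hYder.congr_of_eventuallyEq
        filter_upwards [Ioi_mem_nhds htpos] with u hu
        exact hyY u (le_of_lt hu)
      have : y t = Y t := hyY t htpos.le
      rw [this]
      exact hyder
    · -- t = 0
      subst hteq
      have hIcc : ∀ u ∈ Icc (0:ℝ) a, Y u = x_init + ∫ s in (0:ℝ)..u, g (s, Y s) := by
        intro u hu
        apply hYIE 0 u
        rw [Nat.cast_zero, add_zero]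
        exact hu
      have h1 : HasDerivWithinAt Y (g (0, Y 0)) (Icc 0 a) 0 := by
        apply ((hprim 0).hasDerivWithinAt).congr
        · intro u hu
          exact hIcc u hu
        · exact hIcc 0 ⟨le_refl _, ha.le⟩
      have h2 : HasDerivWithinAt Y (g (0, Y 0)) (Ici 0) 0 :=
        h1.mono_of_mem_nhdsWithin (Icc_mem_nhdsGE_of_mem ⟨le_refl _, ha⟩)
      have h3 : HasDerivWithinAt y (g (0, Y 0)) (Ici 0) 0 := by
        apply h2.congr
        · intro u hu
          exact hyY u hu
        · exact hyY 0 (le_refl _)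
      have hl0 : HasDerivAt (fun s : ℝ => x_init + s • g (0, x_init)) (g (0, x_init)) 0 := by
        have h4 : HasDerivAt (fun s : ℝ => s • g (0, x_init)) ((1:ℝ) • g (0, x_init)) 0 :=
          (hasDerivAt_id 0).smul_const (g (0, x_init))
        rw [one_smul] at h4
        exact h4.const_add x_init
      have h5 : HasDerivWithinAt y (g (0, x_init)) (Iic 0) 0 := by
        apply (hl0.hasDerivWithinAt).congr
        · intro u hu
          rcases lt_or_eq_of_le (mem_Iic.1 hu) with h | h
          · rw [hydef]
            simp only [if_pos h]
          · subst h
            rw [hyY 0 (le_refl _), hY0]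
            simp
        · rw [hyY 0 (le_refl _), hY0]
          simp
      have h6 : g (0, Y 0) = g (0, x_init) := by rw [hY0]
      rw [h6] at h3
      have h7 := h5.union h3
      rw [Iic_union_Ici, hasDerivWithinAt_univ] at h7
      have h8 : g (0, y 0) = g (0, x_init) := by rw [hyY 0 (le_refl _), hY0]
      rw [h8]
      exact h7
  · intro t ht
    rw [hyY t ht.1, hYx t ht]


/-- If `g : ℝ × ℝⁿ → ℝⁿ` is continuous and satisfies a linear growth bound on every
strip `[0,T] × ℝⁿ`, then every solution of `x' = g(t, x)`, `x 0 = x_init` (defined on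
some interval `[0, a)`) extends to a solution defined for all `t ≥ 0`. -/
theorem ode_linear_growth_global_existence {n : ℕ}
    (g : ℝ × EuclideanSpace ℝ (Fin n) → EuclideanSpace ℝ (Fin n))
    (hg : Continuous g)
    (hbound : ∀ T > (0:ℝ), ∃ C₁ > (0:ℝ), ∃ C₂ > (0:ℝ),
      ∀ t ∈ Set.Icc (0:ℝ) T, ∀ x : EuclideanSpace ℝ (Fin n),
        ‖g (t, x)‖ ≤ C₁ + C₂ * ‖x‖)
    (x_init : EuclideanSpace ℝ (Fin n)) :
    ∀ (a : ℝ), 0 < a →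
      ∀ x : ℝ → EuclideanSpace ℝ (Fin n),
        x 0 = x_init →
        (∀ t ∈ Set.Ico (0:ℝ) a, HasDerivAt x (g (t, x t)) t) →
        ∃ y : ℝ → EuclideanSpace ℝ (Fin n),
          y 0 = x_init ∧
          (∀ t ∈ Set.Ici (0:ℝ), HasDerivAt y (g (t, y t)) t) ∧
          (∀ t ∈ Set.Ico (0:ℝ) a, y t = x t) := by
  intro a ha x hx0 hx
  exact main_assembly g hg hbound x_init a ha x hx0 hx
end

section
/- Under the same hypotheses, any solution x : [0,1] → ℝⁿ of x'(t) = T f(x(t), θ, z), x(0) = x_init with (T, θ) ∈ [0, T_max] × Θ satisfies the uniform bound ‖x(t)‖₂ ≤ (‖x_init‖₂ + T_max‖A‖₂‖z‖₂) · exp(T_max(‖A‖₂² + C)) for all t ∈ [0,1], where C = sup_{θ ∈ Θ} C_R(θ). -/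
set_option maxHeartbeats 1000000 in
/-- Uniform a priori bound for solutions of the reparametrized gradient flow. -/
theorem gradient_flow_uniform_bound {n m p : ℕ}
    (A : EuclideanSpace ℝ (Fin n) →L[ℝ] EuclideanSpace ℝ (Fin m))
    (z : EuclideanSpace ℝ (Fin m))
    (Θ : Set (EuclideanSpace ℝ (Fin p))) (hΘ : IsCompact Θ)
    (G : EuclideanSpace ℝ (Fin n) → EuclideanSpace ℝ (Fin p) → EuclideanSpace ℝ (Fin n))
    (C_R : EuclideanSpace ℝ (Fin p) → ℝ)
    (hG : ∀ θ ∈ Θ, ∀ x, ‖G x θ‖ ≤ C_R θ * ‖x‖)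
    (C : ℝ) (hCsup : IsLUB (C_R '' Θ) C)
    (f : EuclideanSpace ℝ (Fin n) → EuclideanSpace ℝ (Fin p) → EuclideanSpace ℝ (Fin n))
    (hf : ∀ x θ, f x θ = -((ContinuousLinearMap.adjoint A) (A x - z)) - G x θ)
    (x_init : EuclideanSpace ℝ (Fin n)) (T_max : ℝ) (hTmax : 0 < T_max)
    (T : ℝ) (hT : T ∈ Set.Icc (0:ℝ) T_max) (θ : EuclideanSpace ℝ (Fin p)) (hθ : θ ∈ Θ)
    (x : ℝ → EuclideanSpace ℝ (Fin n))
    (hx0 : x 0 = x_init)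
    (hx : ∀ t ∈ Set.Icc (0:ℝ) 1, HasDerivAt x (T • f (x t) θ) t) :
    ∀ t ∈ Set.Icc (0:ℝ) 1,
      ‖x t‖ ≤ (‖x_init‖ + T_max * ‖A‖ * ‖z‖) * Real.exp (T_max * (‖A‖ ^ 2 + C)) := by
  intro t ht
  rcases Nat.eq_zero_or_pos n with hn | hn
  · subst hn
    have hx0' : x t = 0 := Subsingleton.elim _ _
    rw [hx0', norm_zero]
    positivity
  · have hAadj : ‖ContinuousLinearMap.adjoint A‖ = ‖A‖ :=
      (ContinuousLinearMap.adjoint (𝕜 := ℝ)).norm_map A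
    set v : EuclideanSpace ℝ (Fin n) := EuclideanSpace.single ⟨0, hn⟩ (1:ℝ) with hv
    have hvnorm : ‖v‖ = 1 := by simp [hv]
    have hCRθ : 0 ≤ C_R θ := by
      have h := hG θ hθ v
      rw [hvnorm, mul_one] at h
      exact le_trans (norm_nonneg _) h
    have hCθ : C_R θ ≤ C := hCsup.1 ⟨θ, hθ, rfl⟩
    have hC : 0 ≤ C := le_trans hCRθ hCθ
    have hAn : (0:ℝ) ≤ ‖A‖ := norm_nonneg _
    have hT0 : 0 ≤ T := hT.1
    have hTle : T ≤ T_max := hT.2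
    have hK0 : 0 ≤ T_max * (‖A‖ ^ 2 + C) := by positivity
    have key : ∀ s ∈ Set.Icc (0:ℝ) 1,
        ‖x s‖ ≤ gronwallBound ‖x_init‖ (T_max * (‖A‖ ^ 2 + C)) (T_max * ‖A‖ * ‖z‖) (s - 0) := by
      apply norm_le_gronwallBound_of_norm_deriv_right_le
      · exact fun s hs => (hx s hs).continuousAt.continuousWithinAt
      · exact fun s hs => (hx s (Set.Ico_subset_Icc_self hs)).hasDerivWithinAt
      · rw [hx0]
      · intro s hs
        have hs' := Set.Ico_subset_Icc_self hs
        rw [hf, norm_smul, Real.norm_eq_abs, abs_of_nonneg hT0]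
        have hxn : (0:ℝ) ≤ ‖x s‖ := norm_nonneg _
        have h1 : ‖-(ContinuousLinearMap.adjoint A) (A (x s) - z) - G (x s) θ‖
            ≤ ‖A‖ * (‖A‖ * ‖x s‖ + ‖z‖) + C_R θ * ‖x s‖ := by
          refine (norm_sub_le _ _).trans ?_
          rw [norm_neg]
          gcongr
          · calc ‖(ContinuousLinearMap.adjoint A) (A (x s) - z)‖
                ≤ ‖ContinuousLinearMap.adjoint A‖ * ‖A (x s) - z‖ :=
                  ContinuousLinearMap.le_opNorm _ _
              _ ≤ ‖A‖ * (‖A‖ * ‖x s‖ + ‖z‖) := by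
                  rw [hAadj]
                  gcongr
                  exact (norm_sub_le _ _).trans (by gcongr; exact A.le_opNorm _)
          · exact hG θ hθ _
        have e1 : T * ‖A‖ ^ 2 ≤ T_max * ‖A‖ ^ 2 := by
          exact mul_le_mul_of_nonneg_right hTle (by positivity)
        have e2 : T * C_R θ ≤ T_max * C := mul_le_mul hTle hCθ hCRθ hTmax.le
        have e3 : T * ‖A‖ ≤ T_max * ‖A‖ := mul_le_mul_of_nonneg_right hTle hAn
        nlinarith [mul_le_mul_of_nonneg_left h1 hT0,
          mul_le_mul_of_nonneg_right e1 hxn,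
          mul_le_mul_of_nonneg_right e2 hxn,
          mul_le_mul_of_nonneg_right e3 (norm_nonneg z)]
    have hb := key t ht
    rw [sub_zero] at hb
    refine hb.trans ?_
    set K := T_max * (‖A‖ ^ 2 + C) with hK
    set ε := T_max * ‖A‖ * ‖z‖ with hε
    have hε0 : 0 ≤ ε := by positivity
    have hδ0 : 0 ≤ ‖x_init‖ := norm_nonneg _
    have ht0 : 0 ≤ t := ht.1
    have ht1 : t ≤ 1 := ht.2
    rcases eq_or_lt_of_le hK0 with hKz | hKpos
    · rw [← hKz, gronwallBound_K0]
      simp only [Real.exp_zero, mul_one]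
      nlinarith
    · rw [gronwallBound_of_K_ne_0 hKpos.ne']
      have h1 : Real.exp (K * t) ≤ Real.exp K := by
        apply Real.exp_le_exp.2
        nlinarith [mul_le_mul_of_nonneg_left ht1 hK0]
      have hexp1 : (1:ℝ) ≤ Real.exp (K * t) :=
        Real.one_le_exp (mul_nonneg hK0 ht0)
      have hprod : Real.exp (-K) * Real.exp K = 1 := by
        rw [← Real.exp_add]; simp
      have h2' : (-K + 1) * Real.exp K ≤ 1 := by
        calc (-K + 1) * Real.exp K ≤ Real.exp (-K) * Real.exp K :=
              mul_le_mul_of_nonneg_right (Real.add_one_le_exp (-K)) (Real.exp_pos K).le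
          _ = 1 := hprod
      have h2 : Real.exp K - 1 ≤ K * Real.exp K := by nlinarith
      have h3 : ε / K * (Real.exp (K * t) - 1) ≤ ε * Real.exp K := by
        rw [div_mul_eq_mul_div, div_le_iff₀ hKpos]
        nlinarith [Real.exp_pos (K * t)]
      have h4 : ‖x_init‖ * Real.exp (K * t) ≤ ‖x_init‖ * Real.exp K :=
        mul_le_mul_of_nonneg_left h1 hδ0
      calc ‖x_init‖ * Real.exp (K * t) + ε / K * (Real.exp (K * t) - 1)
          ≤ ‖x_init‖ * Real.exp K + ε * Real.exp K := add_le_add h4 h3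
        _ = (‖x_init‖ + ε) * Real.exp K := by ring
end

section
/- (Existence of optimal controls) Let J(T, θ) = (1/N) Σᵢ ℓ(xⁱ(1) - yⁱ), where for each i, xⁱ : [0,1] → ℝⁿ solves x'(t) = T f(x(t), θ, zⁱ), x(0) = x_init^i, with f(x,θ,z) = -Aᵀ(Ax - z) - ∇₁R(x,θ). If ℓ : ℝⁿ → ℝ≥0 is continuous, ∇₁R is locally Lipschitz in x and continuous in θ with ‖∇₁R(x,θ)‖₂ ≤ C_R(θ)‖x‖₂, and Θ is compact with sup_{θ∈Θ} C_R(θ) < ∞, then the infimum of J over [0, T_max] × Θ is attained. -/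
set_option maxHeartbeats 1000000

open Set Metric Real

lemma aux_gronwallBound_le {δ K ε t : ℝ} (hδ : 0 ≤ δ) (hK : 1 ≤ K) (hε : 0 ≤ ε)
    (ht0 : 0 ≤ t) (ht1 : t ≤ 1) : gronwallBound δ K ε t ≤ (δ + ε) * Real.exp K := by
  rw [gronwallBound_of_K_ne_0 (by linarith)]
  have hKt : K * t ≤ K := by nlinarith
  have h1 : Real.exp (K * t) ≤ Real.exp K := Real.exp_le_exp.2 hKt
  have h2 : (0:ℝ) < Real.exp (K * t) := Real.exp_pos _
  have h3 : (0:ℝ) < Real.exp K := Real.exp_pos _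
  have h4 : ε / K ≤ ε := div_le_self hε hK
  have h5 : 0 ≤ ε / K := div_nonneg hε (by linarith)
  nlinarith

lemma aux_gronwallBound_lt {K ε : ℝ} (hK : 1 ≤ K) (hε : 0 < ε) :
    gronwallBound 0 K (ε * K / (2 * Real.exp K)) 1 < ε := by
  rw [gronwallBound_of_K_ne_0 (by linarith)]
  have h3 : (0:ℝ) < Real.exp K := Real.exp_pos _
  have hK0 : (0:ℝ) < K := by linarith
  have : ε * K / (2 * Real.exp K) / K = ε / (2 * Real.exp K) := by
    field_simp
  rw [this]
  show 0 * Real.exp (K * 1) + ε / (2 * Real.exp K) * (Real.exp (K * 1) - 1) < ε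
  rw [mul_one, zero_mul, zero_add, div_mul_eq_mul_div, div_lt_iff₀ (by linarith)]
  nlinarith

lemma aux_locallyLipschitz_compact {α β : Type*} [MetricSpace α] [MetricSpace β]
    {f : α → β} (hf : LocallyLipschitz f) {s : Set α} (hs : IsCompact s) :
    ∃ L : ℝ, 0 ≤ L ∧ ∀ x ∈ s, ∀ y ∈ s, dist (f x) (f y) ≤ L * dist x y := by
  have hc := hf.continuous
  choose K t ht hK using hf
  obtain ⟨I, hIs, hIcov⟩ := hs.elim_nhds_subcover (fun x => interior (t x))
    (fun x _ => interior_mem_nhds.2 (ht x))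
  obtain ⟨δ, hδ, hball⟩ := lebesgue_number_lemma_of_metric (ι := {x // x ∈ I})
    (c := fun i => interior (t i.1)) hs (fun i => isOpen_interior)
    (by intro x hx
        obtain ⟨i, hi, hxi⟩ := Set.mem_iUnion₂.1 (hIcov hx)
        exact Set.mem_iUnion.2 ⟨⟨i, hi⟩, hxi⟩)
  have hbded : Bornology.IsBounded (f '' s) := (hs.image hc).isBounded
  set D := Metric.diam (f '' s) with hD
  set K₀ : NNReal := I.sup K with hK₀
  refine ⟨max (K₀ : ℝ) (D / δ), le_max_of_le_left K₀.coe_nonneg, ?_⟩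
  intro x hx y hy
  rcases lt_or_ge (dist x y) δ with hlt | hge
  · obtain ⟨i, hi⟩ := hball x hx
    have hxi : x ∈ t i.1 := interior_subset (hi (Metric.mem_ball_self hδ))
    have hyi : y ∈ t i.1 := interior_subset (hi (by simpa [Metric.mem_ball, dist_comm] using hlt))
    calc dist (f x) (f y) ≤ (K i.1 : ℝ) * dist x y := (hK i.1).dist_le_mul x hxi y hyi
      _ ≤ max (K₀ : ℝ) (D / δ) * dist x y := by
          apply mul_le_mul_of_nonneg_right _ dist_nonneg
          exact le_max_of_le_left (NNReal.coe_le_coe.2 (Finset.le_sup i.2))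
  · have hD0 : 0 ≤ D := Metric.diam_nonneg
    calc dist (f x) (f y) ≤ D := Metric.dist_le_diam_of_mem hbded ⟨x, hx, rfl⟩ ⟨y, hy, rfl⟩
      _ = (D / δ) * δ := by field_simp
      _ ≤ (D / δ) * dist x y := by
          apply mul_le_mul_of_nonneg_left hge (div_nonneg hD0 (le_of_lt hδ))
      _ ≤ max (K₀ : ℝ) (D / δ) * dist x y := by
          apply mul_le_mul_of_nonneg_right (le_max_right _ _) dist_nonneg



/-- Existence of optimal controls for the sampled optimal control problem. -/
theorem existence_of_optimal_controls {n m p N : ℕ} (hN : 0 < N)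
    (A : EuclideanSpace ℝ (Fin n) →L[ℝ] EuclideanSpace ℝ (Fin m))
    (x_init y : Fin N → EuclideanSpace ℝ (Fin n))
    (z : Fin N → EuclideanSpace ℝ (Fin m))
    (T_max : ℝ) (hTmax : 0 < T_max)
    (Θ : Set (EuclideanSpace ℝ (Fin p))) (hΘcpt : IsCompact Θ)
    (hΘconv : Convex ℝ Θ) (hΘne : Θ.Nonempty)
    (l : EuclideanSpace ℝ (Fin n) → ℝ) (hlcont : Continuous l) (hlnonneg : ∀ v, 0 ≤ l v)
    (G : EuclideanSpace ℝ (Fin n) → EuclideanSpace ℝ (Fin p) → EuclideanSpace ℝ (Fin n))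
    (hGcont : Continuous fun q : EuclideanSpace ℝ (Fin n) × EuclideanSpace ℝ (Fin p) =>
      G q.1 q.2)
    (hGlip : ∀ θ, LocallyLipschitz fun x => G x θ)
    (C_R : EuclideanSpace ℝ (Fin p) → ℝ)
    (hG : ∀ θ ∈ Θ, ∀ x, ‖G x θ‖ ≤ C_R θ * ‖x‖)
    (hCbdd : ∃ M : ℝ, ∀ θ ∈ Θ, C_R θ ≤ M)
    (f : EuclideanSpace ℝ (Fin n) → EuclideanSpace ℝ (Fin p) → EuclideanSpace ℝ (Fin m) →
      EuclideanSpace ℝ (Fin n))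
    (hf : ∀ x θ w, f x θ w = -((ContinuousLinearMap.adjoint A) (A x - w)) - G x θ)
    -- the (unique) solution of the state equation for sample `i` and parameters `(T, θ)`
    (X : Fin N → ℝ → EuclideanSpace ℝ (Fin p) → ℝ → EuclideanSpace ℝ (Fin n))
    (hX0 : ∀ i T θ, X i T θ 0 = x_init i)
    (hXode : ∀ i, ∀ T ∈ Set.Icc (0:ℝ) T_max, ∀ θ ∈ Θ, ∀ t ∈ Set.Icc (0:ℝ) 1,
      HasDerivAt (X i T θ) (T • f (X i T θ t) θ (z i)) t)
    (hXuniq : ∀ i, ∀ T ∈ Set.Icc (0:ℝ) T_max, ∀ θ ∈ Θ,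
      ∀ x' : ℝ → EuclideanSpace ℝ (Fin n), x' 0 = x_init i →
        (∀ t ∈ Set.Icc (0:ℝ) 1, HasDerivAt x' (T • f (x' t) θ (z i)) t) →
        ∀ t ∈ Set.Icc (0:ℝ) 1, x' t = X i T θ t)
    (J : ℝ → EuclideanSpace ℝ (Fin p) → ℝ)
    (hJ : ∀ T θ, J T θ = (1 / (N : ℝ)) * ∑ i : Fin N, l (X i T θ 1 - y i)) :
    ∃ T ∈ Set.Icc (0:ℝ) T_max, ∃ θ ∈ Θ,
      ∀ T' ∈ Set.Icc (0:ℝ) T_max, ∀ θ' ∈ Θ, J T θ ≤ J T' θ' := by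
  classical
  obtain ⟨M, hM⟩ := hCbdd
  set M₀ : ℝ := max M 0 with hM₀def
  have hM₀0 : (0:ℝ) ≤ M₀ := le_max_right _ _
  set A' := ContinuousLinearMap.adjoint A with hA'def
  set CA : ℝ := ‖A'‖ with hCAdef
  have hCA : (0:ℝ) ≤ CA := norm_nonneg _
  set S : Set (ℝ × EuclideanSpace ℝ (Fin p)) := Set.Icc 0 T_max ×ˢ Θ with hSdef
  have hScpt : IsCompact S := isCompact_Icc.prod hΘcpt
  -- a general norm bound on f
  have hfnorm : ∀ (i : Fin N) θ, θ ∈ Θ → ∀ x,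
      ‖f x θ (z i)‖ ≤ (CA * ‖A‖ + M₀) * ‖x‖ + CA * ‖z i‖ := by
    intro i θ hθ x
    rw [hf]
    have h1 : ‖-(A' (A x - z i)) - G x θ‖ ≤ ‖A' (A x - z i)‖ + ‖G x θ‖ := by
      calc ‖-(A' (A x - z i)) - G x θ‖ ≤ ‖-(A' (A x - z i))‖ + ‖G x θ‖ := norm_sub_le _ _
        _ = ‖A' (A x - z i)‖ + ‖G x θ‖ := by rw [norm_neg]
    have h2 : ‖A' (A x - z i)‖ ≤ CA * (‖A‖ * ‖x‖ + ‖z i‖) := by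
      calc ‖A' (A x - z i)‖ ≤ CA * ‖A x - z i‖ := A'.le_opNorm _
        _ ≤ CA * (‖A x‖ + ‖z i‖) := by
            exact mul_le_mul_of_nonneg_left (norm_sub_le _ _) hCA
        _ ≤ CA * (‖A‖ * ‖x‖ + ‖z i‖) := by
            exact mul_le_mul_of_nonneg_left (by linarith [A.le_opNorm x]) hCA
    have h3 : ‖G x θ‖ ≤ M₀ * ‖x‖ :=
      le_trans (hG θ hθ x)
        (mul_le_mul_of_nonneg_right (le_trans (hM θ hθ) (le_max_left _ _)) (norm_nonneg _))
    nlinarith [norm_nonneg x]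
  set K₁ : ℝ := T_max * (CA * ‖A‖ + M₀) + 1 with hK₁def
  have hK₁1 : (1:ℝ) ≤ K₁ := by
    have h1 : 0 ≤ T_max * (CA * ‖A‖) := mul_nonneg (le_of_lt hTmax) (mul_nonneg hCA (norm_nonneg A))
    have h2 : 0 ≤ T_max * M₀ := mul_nonneg (le_of_lt hTmax) hM₀0
    rw [hK₁def]; nlinarith
  -- a priori bound on solutions
  have hbound : ∀ i : Fin N, ∀ q ∈ S, ∀ t ∈ Set.Icc (0:ℝ) 1,
      ‖X i q.1 q.2 t‖ ≤ (‖x_init i‖ + T_max * (CA * ‖z i‖)) * Real.exp K₁ := by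
    intro i q hq t ht
    have hq1 : q.1 ∈ Set.Icc (0:ℝ) T_max := hq.1
    have hq2 : q.2 ∈ Θ := hq.2
    have hcont : ContinuousOn (fun t => X i q.1 q.2 t) (Set.Icc 0 1) :=
      fun s hs => (hXode i q.1 hq1 q.2 hq2 s hs).continuousAt.continuousWithinAt
    have hderiv : ∀ s ∈ Set.Ico (0:ℝ) 1, HasDerivWithinAt (fun t => X i q.1 q.2 t)
        (q.1 • f (X i q.1 q.2 s) q.2 (z i)) (Set.Ici s) s :=
      fun s hs => (hXode i q.1 hq1 q.2 hq2 s (Set.Ico_subset_Icc_self hs)).hasDerivWithinAt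
    have hinit : ‖X i q.1 q.2 0‖ ≤ ‖x_init i‖ := by rw [hX0]
    have hbnd : ∀ s ∈ Set.Ico (0:ℝ) 1, ‖q.1 • f (X i q.1 q.2 s) q.2 (z i)‖ ≤
        K₁ * ‖X i q.1 q.2 s‖ + T_max * (CA * ‖z i‖) := by
      intro s _
      have hb := hfnorm i q.2 hq2 (X i q.1 q.2 s)
      have hT0 : (0:ℝ) ≤ q.1 := hq1.1
      have hT1 : q.1 ≤ T_max := hq1.2
      rw [norm_smul, Real.norm_eq_abs, abs_of_nonneg hT0]
      have h5 : q.1 * ‖f (X i q.1 q.2 s) q.2 (z i)‖ ≤ T_max * ‖f (X i q.1 q.2 s) q.2 (z i)‖ :=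
        mul_le_mul_of_nonneg_right hT1 (norm_nonneg _)
      have h6 := mul_le_mul_of_nonneg_left hb (le_of_lt hTmax)
      nlinarith [norm_nonneg (X i q.1 q.2 s), mul_nonneg hCA (norm_nonneg (z i))]
    have key := norm_le_gronwallBound_of_norm_deriv_right_le (f' := fun s => q.1 • f (X i q.1 q.2 s) q.2 (z i)) hcont hderiv hinit hbnd t ht
    calc ‖X i q.1 q.2 t‖ ≤ gronwallBound ‖x_init i‖ K₁ (T_max * (CA * ‖z i‖)) (t - 0) := key
      _ ≤ (‖x_init i‖ + T_max * (CA * ‖z i‖)) * Real.exp K₁ := by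
          rw [sub_zero]
          exact aux_gronwallBound_le (norm_nonneg _)
            hK₁1 (by positivity) ht.1 ht.2
  -- continuity of the endpoint map
  have hXcont : ∀ i : Fin N,
      ContinuousOn (fun q : ℝ × EuclideanSpace ℝ (Fin p) => X i q.1 q.2 1) S := by
    intro i
    intro q₀ hq₀
    set B : ℝ := (‖x_init i‖ + T_max * (CA * ‖z i‖)) * Real.exp K₁ with hBdef
    obtain ⟨L, hL0, hLip⟩ := aux_locallyLipschitz_compact (hGlip q₀.2)
      (isCompact_closedBall (0 : EuclideanSpace ℝ (Fin n)) B)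
    -- Lipschitz bound for f in x, at parameter θ₀ = q₀.2
    have hflip : ∀ a ∈ Metric.closedBall (0 : EuclideanSpace ℝ (Fin n)) B,
        ∀ b ∈ Metric.closedBall (0 : EuclideanSpace ℝ (Fin n)) B,
        ‖f a q₀.2 (z i) - f b q₀.2 (z i)‖ ≤ (CA * ‖A‖ + L) * ‖a - b‖ := by
      intro a ha b hb
      rw [hf, hf]
      have heq : (-(A' (A a - z i)) - G a q₀.2) - (-(A' (A b - z i)) - G b q₀.2)
          = -(A' (A (a - b))) - (G a q₀.2 - G b q₀.2) := by
        simp only [map_sub]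
        abel
      rw [heq]
      have h1 : ‖-(A' (A (a - b))) - (G a q₀.2 - G b q₀.2)‖ ≤
          ‖A' (A (a - b))‖ + ‖G a q₀.2 - G b q₀.2‖ := by
        calc ‖-(A' (A (a - b))) - (G a q₀.2 - G b q₀.2)‖
            ≤ ‖-(A' (A (a - b)))‖ + ‖G a q₀.2 - G b q₀.2‖ := norm_sub_le _ _
          _ = ‖A' (A (a - b))‖ + ‖G a q₀.2 - G b q₀.2‖ := by rw [norm_neg]
      have h2 : ‖A' (A (a - b))‖ ≤ CA * (‖A‖ * ‖a - b‖) :=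
        le_trans (A'.le_opNorm _) (mul_le_mul_of_nonneg_left (A.le_opNorm _) hCA)
      have h3 : ‖G a q₀.2 - G b q₀.2‖ ≤ L * ‖a - b‖ := by
        have := hLip a ha b hb
        rwa [dist_eq_norm, dist_eq_norm] at this
      nlinarith [norm_nonneg (a - b)]
    -- uniform continuity of the parametrized vector field
    have hΦcont : Continuous (fun r : (ℝ × EuclideanSpace ℝ (Fin p)) × EuclideanSpace ℝ (Fin n)
        => r.1.1 • f r.2 r.1.2 (z i)) := by
      have heq : (fun r : (ℝ × EuclideanSpace ℝ (Fin p)) × EuclideanSpace ℝ (Fin n)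
          => r.1.1 • f r.2 r.1.2 (z i))
          = fun r => r.1.1 • (-(A' (A r.2 - z i)) - G r.2 r.1.2) := by
        funext r; rw [hf]
      rw [heq]
      exact (continuous_fst.fst).smul
        (((A'.continuous.comp ((A.continuous.comp continuous_snd).sub
          continuous_const)).neg).sub (hGcont.comp (continuous_snd.prodMk continuous_fst.snd)))
    have hUC := (hScpt.prod (isCompact_closedBall (0 : EuclideanSpace ℝ (Fin n))
      B)).uniformContinuousOn_of_continuous hΦcont.continuousOn
    rw [Metric.uniformContinuousOn_iff] at hUC
    rw [Metric.continuousWithinAt_iff]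
    intro ε hε
    set K : ℝ := T_max * (CA * ‖A‖ + L) + 1 with hKdef
    have hK1 : (1:ℝ) ≤ K := by
      have h1 : 0 ≤ T_max * (CA * ‖A‖) :=
        mul_nonneg (le_of_lt hTmax) (mul_nonneg hCA (norm_nonneg A))
      have h2 : 0 ≤ T_max * L := mul_nonneg (le_of_lt hTmax) hL0
      rw [hKdef]; nlinarith
    have hK0 : (0:ℝ) < K := by linarith
    set ε' : ℝ := ε * K / (2 * Real.exp K) with hε'def
    have hε'0 : (0:ℝ) < ε' := div_pos (mul_pos hε hK0) (by positivity)
    obtain ⟨δ, hδ0, hδ⟩ := hUC ε' hε'0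
    refine ⟨δ, hδ0, ?_⟩
    intro q hq hdq
    have hq1 : q.1 ∈ Set.Icc (0:ℝ) T_max := hq.1
    have hq2 : q.2 ∈ Θ := hq.2
    have hq₀1 : q₀.1 ∈ Set.Icc (0:ℝ) T_max := hq₀.1
    have hq₀2 : q₀.2 ∈ Θ := hq₀.2
    -- Grönwall for the difference of the two solutions
    have hcont : ContinuousOn (fun t => X i q.1 q.2 t - X i q₀.1 q₀.2 t) (Set.Icc 0 1) :=
      fun s hs => (((hXode i q.1 hq1 q.2 hq2 s hs).sub
        (hXode i q₀.1 hq₀1 q₀.2 hq₀2 s hs)).continuousAt).continuousWithinAt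
    have hderiv : ∀ s ∈ Set.Ico (0:ℝ) 1,
        HasDerivWithinAt (fun t => X i q.1 q.2 t - X i q₀.1 q₀.2 t)
          (q.1 • f (X i q.1 q.2 s) q.2 (z i) - q₀.1 • f (X i q₀.1 q₀.2 s) q₀.2 (z i))
          (Set.Ici s) s := fun s hs =>
      ((hXode i q.1 hq1 q.2 hq2 s (Set.Ico_subset_Icc_self hs)).sub
        (hXode i q₀.1 hq₀1 q₀.2 hq₀2 s (Set.Ico_subset_Icc_self hs))).hasDerivWithinAt
    have hinit : ‖X i q.1 q.2 0 - X i q₀.1 q₀.2 0‖ ≤ 0 := by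
      rw [hX0, hX0, sub_self, norm_zero]
    have hbnd : ∀ s ∈ Set.Ico (0:ℝ) 1,
        ‖q.1 • f (X i q.1 q.2 s) q.2 (z i) - q₀.1 • f (X i q₀.1 q₀.2 s) q₀.2 (z i)‖ ≤
          K * ‖X i q.1 q.2 s - X i q₀.1 q₀.2 s‖ + ε' := by
      intro s hs
      have hsIcc : s ∈ Set.Icc (0:ℝ) 1 := Set.Ico_subset_Icc_self hs
      have hx1B : X i q.1 q.2 s ∈ Metric.closedBall (0 : EuclideanSpace ℝ (Fin n)) B := by
        rw [Metric.mem_closedBall, dist_zero_right]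
        exact hbound i q hq s hsIcc
      have hx0B : X i q₀.1 q₀.2 s ∈ Metric.closedBall (0 : EuclideanSpace ℝ (Fin n)) B := by
        rw [Metric.mem_closedBall, dist_zero_right]
        exact hbound i q₀ hq₀ s hsIcc
      have hsplit : q.1 • f (X i q.1 q.2 s) q.2 (z i) - q₀.1 • f (X i q₀.1 q₀.2 s) q₀.2 (z i)
          = q₀.1 • (f (X i q.1 q.2 s) q₀.2 (z i) - f (X i q₀.1 q₀.2 s) q₀.2 (z i))
            + (q.1 • f (X i q.1 q.2 s) q.2 (z i) - q₀.1 • f (X i q.1 q.2 s) q₀.2 (z i)) := by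
        rw [smul_sub]; abel
      rw [hsplit]
      have hterm1 : ‖q₀.1 • (f (X i q.1 q.2 s) q₀.2 (z i) - f (X i q₀.1 q₀.2 s) q₀.2 (z i))‖
          ≤ T_max * ((CA * ‖A‖ + L) * ‖X i q.1 q.2 s - X i q₀.1 q₀.2 s‖) := by
        rw [norm_smul, Real.norm_eq_abs, abs_of_nonneg hq₀1.1]
        have h5 := hflip _ hx1B _ hx0B
        have h6 : q₀.1 * ‖f (X i q.1 q.2 s) q₀.2 (z i) - f (X i q₀.1 q₀.2 s) q₀.2 (z i)‖
            ≤ T_max * ‖f (X i q.1 q.2 s) q₀.2 (z i) - f (X i q₀.1 q₀.2 s) q₀.2 (z i)‖ :=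
          mul_le_mul_of_nonneg_right hq₀1.2 (norm_nonneg _)
        nlinarith [mul_le_mul_of_nonneg_left h5 (le_of_lt hTmax)]
      have hterm2 : ‖q.1 • f (X i q.1 q.2 s) q.2 (z i)
          - q₀.1 • f (X i q.1 q.2 s) q₀.2 (z i)‖ ≤ ε' := by
        have hmem1 : (q, X i q.1 q.2 s) ∈ S ×ˢ Metric.closedBall
            (0 : EuclideanSpace ℝ (Fin n)) B := ⟨hq, hx1B⟩
        have hmem0 : (q₀, X i q.1 q.2 s) ∈ S ×ˢ Metric.closedBall
            (0 : EuclideanSpace ℝ (Fin n)) B := ⟨hq₀, hx1B⟩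
        have hdd : dist ((q, X i q.1 q.2 s)) ((q₀, X i q.1 q.2 s)) < δ := by
          rw [Prod.dist_eq]
          simpa [dist_self, max_eq_left dist_nonneg] using hdq
        have := hδ _ hmem1 _ hmem0 hdd
        rw [dist_eq_norm] at this
        exact le_of_lt this
      calc ‖q₀.1 • (f (X i q.1 q.2 s) q₀.2 (z i) - f (X i q₀.1 q₀.2 s) q₀.2 (z i))
            + (q.1 • f (X i q.1 q.2 s) q.2 (z i) - q₀.1 • f (X i q.1 q.2 s) q₀.2 (z i))‖
          ≤ ‖q₀.1 • (f (X i q.1 q.2 s) q₀.2 (z i) - f (X i q₀.1 q₀.2 s) q₀.2 (z i))‖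
            + ‖q.1 • f (X i q.1 q.2 s) q.2 (z i) - q₀.1 • f (X i q.1 q.2 s) q₀.2 (z i)‖ :=
            norm_add_le _ _
        _ ≤ K * ‖X i q.1 q.2 s - X i q₀.1 q₀.2 s‖ + ε' := by
            have := norm_nonneg (X i q.1 q.2 s - X i q₀.1 q₀.2 s)
            nlinarith [hterm1, hterm2]
    have key := norm_le_gronwallBound_of_norm_deriv_right_le (f' := fun s => q.1 • f (X i q.1 q.2 s) q.2 (z i) - q₀.1 • f (X i q₀.1 q₀.2 s) q₀.2 (z i)) hcont hderiv hinit hbnd 1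
      (by constructor <;> norm_num)
    rw [dist_eq_norm]
    calc ‖X i q.1 q.2 1 - X i q₀.1 q₀.2 1‖ ≤ gronwallBound 0 K ε' (1 - 0) := key
      _ = gronwallBound 0 K ε' 1 := by rw [sub_zero]
      _ < ε := aux_gronwallBound_lt hK1 hε
  -- conclude by compactness
  have hJeq : (fun q : ℝ × EuclideanSpace ℝ (Fin p) => J q.1 q.2)
      = fun q => (1 / (N:ℝ)) * ∑ i : Fin N, l (X i q.1 q.2 1 - y i) :=
    funext fun q => hJ q.1 q.2
  have hJcont : ContinuousOn (fun q : ℝ × EuclideanSpace ℝ (Fin p) => J q.1 q.2) S := by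
    rw [hJeq]
    exact continuousOn_const.mul (continuousOn_finset_sum _ fun i _ =>
      hlcont.comp_continuousOn ((hXcont i).sub continuousOn_const))
  obtain ⟨θ₀, hθ₀⟩ := hΘne
  obtain ⟨q, hqS, hqmin⟩ := hScpt.exists_isMinOn
    ⟨(0, θ₀), ⟨⟨le_refl 0, le_of_lt hTmax⟩, hθ₀⟩⟩ hJcont
  exact ⟨q.1, hqS.1, q.2, hqS.2, fun T' hT' θ' hθ' =>
    isMinOn_iff.mp hqmin (T', θ') ⟨hT', hθ'⟩⟩
end

section
/- Let f̃(x, T, θ, z) = B(T)⁻¹(x + (T/S)(Aᵀz - ∇₁R(x,θ))) with B(T) = Id + (T/S)AᵀA, and suppose x_{s+1} = f̃(x_s, T, θ, z). Then the derivative of f̃ with respect to T satisfies ∂_T f̃(x_s, T, θ, z) = (1/T) B(T)⁻¹ (x_{s+1} - x_s) for T > 0. -/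
set_option maxHeartbeats 1000000

/-- Derivative of the semi-implicit update map `f̃` with respect to the time horizon `T`:
`∂_T f̃(x_s, T, θ, z) = (1/T) B(T)⁻¹ (x_{s+1} - x_s)`. -/
theorem semi_implicit_update_deriv_in_T {n m : ℕ}
    (A : EuclideanSpace ℝ (Fin n) →L[ℝ] EuclideanSpace ℝ (Fin m))
    (z : EuclideanSpace ℝ (Fin m)) (S : ℝ) (hS : 0 < S)
    (B Binv : ℝ → (EuclideanSpace ℝ (Fin n) →L[ℝ] EuclideanSpace ℝ (Fin n)))
    (hB : ∀ t, B t = ContinuousLinearMap.id ℝ (EuclideanSpace ℝ (Fin n)) +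
      (t / S) • ((ContinuousLinearMap.adjoint A).comp A))
    (hBinv₁ : ∀ t, 0 ≤ t →
      (B t).comp (Binv t) = ContinuousLinearMap.id ℝ (EuclideanSpace ℝ (Fin n)))
    (hBinv₂ : ∀ t, 0 ≤ t →
      (Binv t).comp (B t) = ContinuousLinearMap.id ℝ (EuclideanSpace ℝ (Fin n)))
    (g : EuclideanSpace ℝ (Fin n))  -- `g = ∇₁R(x_s, θ)`
    (ftilde : EuclideanSpace ℝ (Fin n) → ℝ → EuclideanSpace ℝ (Fin n))
    (hftilde : ∀ x t, ftilde x t =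
      Binv t (x + (t / S) • ((ContinuousLinearMap.adjoint A) z - g)))
    (T : ℝ) (hT : 0 < T)
    (xs xs1 : EuclideanSpace ℝ (Fin n)) (hx1 : xs1 = ftilde xs T) :
    HasDerivAt (fun t => ftilde xs t) ((1 / T) • Binv T (xs1 - xs)) T := by
  set K : EuclideanSpace ℝ (Fin n) →L[ℝ] EuclideanSpace ℝ (Fin n) :=
    (ContinuousLinearMap.adjoint A).comp A with hK
  set v : EuclideanSpace ℝ (Fin n) := (ContinuousLinearMap.adjoint A) z - g with hv
  have hunit : ∀ t : ℝ, 0 ≤ t → Binv t = Ring.inverse (B t) := by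
    intro t ht
    have hu : (⟨B t, Binv t, hBinv₁ t ht, hBinv₂ t ht⟩ :
        (EuclideanSpace ℝ (Fin n) →L[ℝ] EuclideanSpace ℝ (Fin n))ˣ).val = B t := rfl
    rw [← hu, Ring.inverse_unit]
    rfl
  set uT : (EuclideanSpace ℝ (Fin n) →L[ℝ] EuclideanSpace ℝ (Fin n))ˣ :=
    ⟨B T, Binv T, hBinv₁ T hT.le, hBinv₂ T hT.le⟩ with huT
  have huTv : ((uT⁻¹ : _ˣ) : EuclideanSpace ℝ (Fin n) →L[ℝ] EuclideanSpace ℝ (Fin n))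
      = Binv T := rfl
  set D : EuclideanSpace ℝ (Fin n) →L[ℝ] EuclideanSpace ℝ (Fin n) :=
    (Binv T).comp (((1 / S) • K).comp (Binv T)) with hD
  have hB' : HasDerivAt B ((1 / S) • K) T := by
    have h1 : HasDerivAt (fun t : ℝ => (t / S) • K) ((1 / S) • K) T := by
      have := ((hasDerivAt_id T).div_const S).smul_const K
      simpa using this
    have h2 := h1.const_add (ContinuousLinearMap.id ℝ (EuclideanSpace ℝ (Fin n)))
    exact h2.congr_of_eventuallyEq (Filter.Eventually.of_forall fun t => hB t)
  have hMinv : HasDerivAt (fun t => Ring.inverse (B t)) (-D) T := by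
    have h3 := (hasFDerivAt_ringInverse (𝕜 := ℝ) uT).comp_hasDerivAt T hB'
    exact h3
  have hBinv' : HasDerivAt Binv (-D) T := by
    refine hMinv.congr_of_eventuallyEq ?_
    filter_upwards [Ioi_mem_nhds hT] with t ht
    exact hunit t (le_of_lt ht)
  have hc : HasDerivAt (fun t : ℝ => xs + (t / S) • v) ((1 / S) • v) T := by
    have h1 : HasDerivAt (fun t : ℝ => (t / S) • v) ((1 / S) • v) T := by
      have := ((hasDerivAt_id T).div_const S).smul_const v
      simpa using this
    simpa using h1.const_add xs
  have hmain := hBinv'.clm_apply hc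
  have heq : (fun t => ftilde xs t) = fun t => (Binv t) (xs + (t / S) • v) := by
    funext t; rw [hftilde]
  rw [heq]
  refine hmain.congr_deriv (Eq.symm ?_)
  -- value equality
  have hx1' : xs1 = Binv T (xs + (T / S) • v) := by rw [hx1, hftilde]
  have hBx1 : B T xs1 = xs + (T / S) • v := by
    rw [hx1']
    have := congrArg (fun (L : EuclideanSpace ℝ (Fin n) →L[ℝ] EuclideanSpace ℝ (Fin n)) =>
      L (xs + (T / S) • v)) (hBinv₁ T hT.le)
    simpa using this
  have hKx1 : xs1 + (T / S) • K xs1 = xs + (T / S) • v := by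
    have h := hBx1
    rw [hB T] at h
    simpa using h
  have hdiff : xs1 - xs = (T / S) • (v - K xs1) := by
    rw [smul_sub]
    linear_combination (norm := module) hKx1
  have hS0 : S ≠ 0 := ne_of_gt hS
  have hT0 : T ≠ 0 := ne_of_gt hT
  have hcoef : (1 / T) * (T / S) = 1 / S := by field_simp
  have e1 : (-D) (xs + (T / S) • v) = -((1 / S) • Binv T (K xs1)) := by
    rw [hD]
    simp only [ContinuousLinearMap.neg_apply, ContinuousLinearMap.comp_apply,
      ContinuousLinearMap.smul_apply, ← hx1', map_smul]
  calc (1 / T) • Binv T (xs1 - xs)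
      = (1 / T) • Binv T ((T / S) • (v - K xs1)) := by rw [hdiff]
    _ = ((1 / T) * (T / S)) • Binv T (v - K xs1) := by rw [map_smul, smul_smul]
    _ = (1 / S) • (Binv T v - Binv T (K xs1)) := by rw [hcoef, map_sub]
    _ = (-D) (xs + (T / S) • v) + Binv T ((1 / S) • v) := by
        rw [e1, map_smul, smul_sub]; abel
end
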